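/- arXiv:math/9210205 — 6 statements merged into one kernel-verified Lean document; each statement's English description precedes it below -/
import Mathlib

section
/- A sequence in a Banach space is equivalent to the summing basis if and only if it is both a DUC-sequence and an (s)-sequence. -/
open Filter Finset

section Defs

variable {X : Type*} [NormedAddCommGroup X] [NormedSpace ℝ X]

/-- A sequence is weak-Cauchy if `f (b n)` converges for every continuous functional `f`. -/
def WeakCauchy (b : ℕ → X) : Prop :=
  ∀ f : X →L[ℝ] ℝ, ∃ L : ℝ, Tendsto (fun n => f (b n)) atTop (nhds L)

/-- Weak convergence of a sequence to a point. -/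
def WeakConvTo (b : ℕ → X) (x : X) : Prop :=
  ∀ f : X →L[ℝ] ℝ, Tendsto (fun n => f (b n)) atTop (nhds (f x))

/-- A non-trivial weak-Cauchy sequence: weak-Cauchy but not weakly convergent. -/
def NontrivialWeakCauchy (b : ℕ → X) : Prop :=
  WeakCauchy b ∧ ¬ ∃ x : X, WeakConvTo b x

/-- `b` is a basic sequence with basis constant at most `C`:
the basis projections on the linear span have norm at most `C`. -/
def IsBasicWithConst (C : ℝ) (b : ℕ → X) : Prop :=
  1 ≤ C ∧ (∀ j, b j ≠ 0) ∧
    ∀ (c : ℕ → ℝ) (m n : ℕ), m ≤ n →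
      ‖∑ j ∈ Finset.range m, c j • b j‖ ≤ C * ‖∑ j ∈ Finset.range n, c j • b j‖

/-- A basic sequence. -/
def IsBasic (b : ℕ → X) : Prop := ∃ C : ℝ, IsBasicWithConst C b

/-- The partial sums `∑_{j<n} c j • b j` are norm-bounded. -/
def BoundedPartialSums (c : ℕ → ℝ) (b : ℕ → X) : Prop :=
  ∃ M : ℝ, ∀ n, ‖∑ j ∈ Finset.range n, c j • b j‖ ≤ M

/-- A strongly summing (s.s.) sequence: weak-Cauchy basic, and whenever the
partial sums `∑ c j • b j` are bounded, `∑ c j` converges. -/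
def StronglySumming (b : ℕ → X) : Prop :=
  WeakCauchy b ∧ IsBasic b ∧
    ∀ c : ℕ → ℝ, BoundedPartialSums c b →
      ∃ L : ℝ, Tendsto (fun n => ∑ j ∈ Finset.range n, c j) atTop (nhds L)

/-- `b` dominates the summing basis. -/
def DominatesSummingBasis (b : ℕ → X) : Prop :=
  ∃ β : ℝ, ∀ (c : ℕ → ℝ) (n : ℕ),
    |∑ j ∈ Finset.range n, c j| ≤ β * ‖∑ j ∈ Finset.range n, c j • b j‖

/-- An (s)-sequence: a weak-Cauchy basic sequence dominating the summing basis. -/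
def IsSSeq (b : ℕ → X) : Prop := WeakCauchy b ∧ IsBasic b ∧ DominatesSummingBasis b

/-- Semi-normalized sequence. -/
def SemiNormalized (b : ℕ → X) : Prop :=
  ∃ a A : ℝ, 0 < a ∧ ∀ j, a ≤ ‖b j‖ ∧ ‖b j‖ ≤ A

/-- The sequence of partial sums. -/
def partialSums (e : ℕ → X) : ℕ → X := fun n => ∑ j ∈ Finset.range n, e j

/-- A (c)-sequence: a semi-normalized basic sequence whose partial sums are weak-Cauchy. -/
def IsCSeq (e : ℕ → X) : Prop := SemiNormalized e ∧ IsBasic e ∧ WeakCauchy (partialSums e)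

/-- A (c.c.)-sequence: a basic sequence with weak-Cauchy partial sums such that
boundedness of `∑ c j • e j` forces the scalar sequence `c` to converge. -/
def IsCC (e : ℕ → X) : Prop :=
  IsBasic e ∧ WeakCauchy (partialSums e) ∧
    ∀ c : ℕ → ℝ, BoundedPartialSums c e → ∃ L : ℝ, Tendsto c atTop (nhds L)

/-- The difference sequence `e 0 = b 0`, `e j = b j - b (j-1)`. -/
def diffSeq (b : ℕ → X) : ℕ → X := fun j => if j = 0 then b 0 else b j - b (j - 1)

/-- `y` is a convex block basis of `x`. -/
def ConvexBlockBasis (y x : ℕ → X) : Prop :=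
  ∃ (n : ℕ → ℕ) (l : ℕ → ℝ), StrictMono n ∧ (∀ i, 0 ≤ l i) ∧
    ∀ j, (∑ i ∈ Finset.Ioc (n j) (n (j + 1)), l i) = 1 ∧
      y j = ∑ i ∈ Finset.Ioc (n j) (n (j + 1)), l i • x i

/-- The norm, in the space `Se` of convergent series, of the finitely supported
sequence `(c 0, …, c n, 0, …)`: the sup of absolute values of its partial sums. -/
noncomputable def sbNorm (c : ℕ → ℝ) (n : ℕ) : ℝ :=
  (Finset.range (n + 2)).sup' ⟨0, Finset.mem_range.mpr (Nat.succ_pos _)⟩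
    (fun m => |∑ j ∈ Finset.range m, c j|)

/-- `b` is equivalent to the summing basis (the unit vector basis of `Se ≅ c₀`). -/
def EquivSummingBasis (b : ℕ → X) : Prop :=
  ∃ A B : ℝ, 0 < A ∧ ∀ (c : ℕ → ℝ) (n : ℕ),
    A * sbNorm c n ≤ ‖∑ j ∈ Finset.range (n + 1), c j • b j‖ ∧
    ‖∑ j ∈ Finset.range (n + 1), c j • b j‖ ≤ B * sbNorm c n

/-- Weakly unconditionally Cauchy sequence. -/
def WUC (x : ℕ → X) : Prop := ∀ f : X →L[ℝ] ℝ, Summable (fun j => |f (x j)|)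

/-- DUC: the difference sequence is WUC. -/
def DUC (b : ℕ → X) : Prop := WUC (diffSeq b)

/-- The WUC "norm" `sup { ∑ |f (x j)| : ‖f‖ ≤ 1 }`. -/
noncomputable def wucNorm (x : ℕ → X) : ℝ :=
  sSup {r : ℝ | ∃ f : X →L[ℝ] ℝ, ‖f‖ ≤ 1 ∧ HasSum (fun j => |f (x j)|) r}

/-- The DUC "norm" of a sequence. -/
noncomputable def ducNorm (b : ℕ → X) : ℝ := wucNorm (diffSeq b)

/-- A boundedly complete sequence. -/
def BoundedlyComplete (b : ℕ → X) : Prop :=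
  ∀ c : ℕ → ℝ, BoundedPartialSums c b →
    ∃ x : X, Tendsto (fun n => ∑ j ∈ Finset.range n, c j • b j) atTop (nhds x)

/-- A skipped boundedly complete sequence. -/
def SkippedBoundedlyComplete (e : ℕ → X) : Prop :=
  ∀ c : ℕ → ℝ, (∀ N, ∃ j ≥ N, c j = 0) → BoundedPartialSums c e →
    ∃ x : X, Tendsto (fun n => ∑ j ∈ Finset.range n, c j • e j) atTop (nhds x)

/-- An ε-(c.c.) sequence. -/
def IsEpsCC (ε : ℝ) (e : ℕ → X) : Prop :=
  IsCSeq e ∧ ∀ c : ℕ → ℝ, (∀ N, ∃ j ≥ N, c j = 0) →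
    (∀ n, ‖∑ j ∈ Finset.range n, c j • e j‖ ≤ 1) →
    Filter.limsup (fun j => |c j|) atTop < ε

end Defs


section Aux

variable {X : Type*} [NormedAddCommGroup X] [NormedSpace ℝ X]

lemma sbNorm_nonneg' (c : ℕ → ℝ) (n : ℕ) : 0 ≤ sbNorm c n := by
  have h0 : (0:ℕ) ∈ Finset.range (n+2) := Finset.mem_range.mpr (Nat.succ_pos _)
  have := Finset.le_sup' (fun m => |∑ j ∈ Finset.range m, c j|) h0
  simpa [sbNorm] using this

lemma abs_le_sbNorm (c : ℕ → ℝ) {m n : ℕ} (h : m < n + 2) :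
    |∑ j ∈ Finset.range m, c j| ≤ sbNorm c n := by
  unfold sbNorm
  exact Finset.le_sup' (fun m => |∑ j ∈ Finset.range m, c j|) (Finset.mem_range.mpr h)

lemma sbNorm_le' (c : ℕ → ℝ) (n : ℕ) {r : ℝ}
    (h : ∀ m, m < n + 2 → |∑ j ∈ Finset.range m, c j| ≤ r) : sbNorm c n ≤ r :=
  Finset.sup'_le _ _ fun m hm => h m (Finset.mem_range.mp hm)

lemma sbNorm_mono (c : ℕ → ℝ) {m n : ℕ} (h : m ≤ n) : sbNorm c m ≤ sbNorm c n :=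
  sbNorm_le' c m fun k hk => abs_le_sbNorm c (lt_of_lt_of_le hk (by omega))

lemma sum_diffSeq (b : ℕ → X) (n : ℕ) :
    ∑ i ∈ Finset.range (n+1), diffSeq b i = b n := by
  induction n with
  | zero => simp [diffSeq]
  | succ n ih =>
      rw [Finset.sum_range_succ, ih]
      simp [diffSeq]

lemma abel_sum (b : ℕ → X) (c : ℕ → ℝ) (n : ℕ) :
    ∑ j ∈ Finset.range n, c j • b j
      = ∑ i ∈ Finset.range n, (∑ j ∈ Finset.Ico i n, c j) • diffSeq b i := by
  calc ∑ j ∈ Finset.range n, c j • b j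
      = ∑ j ∈ Finset.range n, ∑ i ∈ Finset.range (j+1), c j • diffSeq b i := by
        refine Finset.sum_congr rfl fun j _ => ?_
        rw [← Finset.smul_sum, sum_diffSeq]
    _ = ∑ i ∈ Finset.range n, ∑ j ∈ Finset.Ico i n, c j • diffSeq b i := by
        refine Finset.sum_comm' fun j i => ?_
        simp only [Finset.mem_range, Finset.mem_Ico, Nat.lt_succ_iff]
        omega
    _ = _ := by
        refine Finset.sum_congr rfl fun i _ => ?_
        rw [Finset.sum_smul]

lemma delta_partial_sum (j m : ℕ) :
    ∑ i ∈ Finset.range m, (if i = j then (1:ℝ) else 0) = if j < m then 1 else 0 := by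
  rw [Finset.sum_ite_eq' (Finset.range m) j (fun _ => (1:ℝ))]
  simp [Finset.mem_range]

lemma sbNorm_delta (j : ℕ) :
    sbNorm (fun i => if i = j then (1:ℝ) else 0) j = 1 := by
  apply le_antisymm
  · apply sbNorm_le'
    intro m _
    rw [delta_partial_sum]
    split <;> simp
  · have := abs_le_sbNorm (fun i => if i = j then (1:ℝ) else 0)
      (show j+1 < j+2 by omega)
    rwa [delta_partial_sum, if_pos (by omega), abs_one] at this

lemma delta_vec_sum (b : ℕ → X) (j : ℕ) :
    ∑ i ∈ Finset.range (j+1), (if i = j then (1:ℝ) else 0) • b i = b j := by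
  have : ∀ i, (if i = j then (1:ℝ) else 0) • b i = if i = j then b i else 0 := by
    intro i; split <;> simp
  rw [Finset.sum_congr rfl fun i _ => this i, Finset.sum_ite_eq' (Finset.range (j+1)) j b]
  simp

lemma duc_of_upper (b : ℕ → X) {B : ℝ} (hB : 0 ≤ B)
    (h : ∀ (c : ℕ → ℝ) (n : ℕ),
      ‖∑ j ∈ Finset.range (n+1), c j • b j‖ ≤ B * sbNorm c n) :
    DUC b := by
  intro f
  refine summable_of_sum_range_le (c := 2 * B * ‖f‖) (fun j => abs_nonneg _) ?_
  intro n
  rcases n with _ | N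
  · simpa using mul_nonneg (mul_nonneg (by norm_num) hB) (norm_nonneg f)
  set n := N + 1 with hn
  set d : ℕ → ℝ := fun j => if j < n then (if f (diffSeq b j) < 0 then -1 else 1) else 0
    with hd
  set c : ℕ → ℝ := fun j => d j - d (j+1) with hc
  have hd1 : ∀ j, |d j| ≤ 1 := by
    intro j; simp only [hd]
    split
    · split <;> norm_num
    · norm_num
  have htel : ∀ m, ∑ j ∈ Finset.range m, c j = d 0 - d m := fun m =>
    Finset.sum_range_sub' d m
  have hIco : ∀ i, i < n → ∑ j ∈ Finset.Ico i n, c j = d i := by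
    intro i hi
    rw [Finset.sum_Ico_eq_sub _ hi.le, htel, htel]
    have hdn : d n = 0 := by simp [hd]
    rw [hdn]; ring
  have hfd : ∀ i, i < n → d i * f (diffSeq b i) = |f (diffSeq b i)| := by
    intro i hi
    simp only [hd, if_pos hi]
    split
    · rw [abs_of_neg (by assumption)]; ring
    · rw [abs_of_nonneg (not_lt.mp (by assumption))]; ring
  have key : ∑ j ∈ Finset.range n, |f (diffSeq b j)|
      = f (∑ j ∈ Finset.range n, c j • b j) := by
    rw [abel_sum, map_sum]
    refine (Finset.sum_congr rfl fun i hi => ?_).symm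
    rw [hIco i (Finset.mem_range.mp hi), map_smul, smul_eq_mul,
      hfd i (Finset.mem_range.mp hi)]
  have hnorm : sbNorm c N ≤ 2 := by
    apply sbNorm_le'
    intro m _
    rw [htel]
    have h0 := hd1 0
    have hm := hd1 m
    calc |d 0 - d m| ≤ |d 0| + |d m| := by
          rw [sub_eq_add_neg]
          exact (abs_add_le _ _).trans (by rw [abs_neg])
      _ ≤ 2 := by linarith
  calc ∑ j ∈ Finset.range n, |f (diffSeq b j)|
      = f (∑ j ∈ Finset.range n, c j • b j) := key
    _ ≤ |f (∑ j ∈ Finset.range n, c j • b j)| := le_abs_self _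
    _ ≤ ‖f‖ * ‖∑ j ∈ Finset.range n, c j • b j‖ := f.le_opNorm _
    _ ≤ ‖f‖ * (B * sbNorm c N) := by
        exact mul_le_mul_of_nonneg_left (h c N) (norm_nonneg f)
    _ ≤ ‖f‖ * (B * 2) := by
        refine mul_le_mul_of_nonneg_left ?_ (norm_nonneg f)
        exact mul_le_mul_of_nonneg_left hnorm hB
    _ = 2 * B * ‖f‖ := by ring

lemma weakCauchy_of_duc (b : ℕ → X) (hduc : DUC b) : WeakCauchy b := by
  intro f
  have hs : Summable fun j => f (diffSeq b j) := (hduc f).of_abs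
  obtain ⟨L, hL⟩ := hs
  refine ⟨L, ?_⟩
  have h1 : Tendsto (fun n => ∑ j ∈ Finset.range n, f (diffSeq b j)) atTop (nhds L) :=
    hL.tendsto_sum_nat
  have h2 := h1.comp (tendsto_add_atTop_nat 1)
  refine h2.congr fun n => ?_
  show ∑ j ∈ Finset.range (n+1), f (diffSeq b j) = f (b n)
  rw [← map_sum, sum_diffSeq]

end Aux

/-- a sequence is equivalent to the summing basis iff it is both a
DUC-sequence and an (s)-sequence. -/
theorem stmt11 {X : Type*} [NormedAddCommGroup X] [NormedSpace ℝ X]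
    (b : ℕ → X) :
    EquivSummingBasis b ↔ (DUC b ∧ IsSSeq b) := by
  constructor
  · -- forward direction
    rintro ⟨A, B, hA, h⟩
    -- basic facts from the δ-sequences
    have hbj : ∀ j : ℕ, A ≤ ‖b j‖ ∧ ‖b j‖ ≤ B := by
      intro j
      have h1 := (h (fun i => if i = j then (1:ℝ) else 0) j).1
      have h2 := (h (fun i => if i = j then (1:ℝ) else 0) j).2
      rw [delta_vec_sum, sbNorm_delta, mul_one] at h1 h2
      exact ⟨h1, h2⟩
    have hAB : A ≤ B := le_trans (hbj 0).1 (hbj 0).2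
    have hB0 : 0 ≤ B := le_trans hA.le hAB
    have hupper : ∀ (c : ℕ → ℝ) (n : ℕ),
        ‖∑ j ∈ Finset.range (n+1), c j • b j‖ ≤ B * sbNorm c n := fun c n => (h c n).2
    have hduc : DUC b := duc_of_upper b hB0 hupper
    refine ⟨hduc, weakCauchy_of_duc b hduc, ⟨B / A, ?_, ?_, ?_⟩, ⟨A⁻¹, ?_⟩⟩
    · exact (one_le_div hA).mpr hAB
    · intro j hj0
      have := (hbj j).1
      rw [hj0, norm_zero] at this
      linarith
    · intro c m n hmn
      rcases m with _ | m'
      · simp only [Finset.range_zero, Finset.sum_empty, norm_zero]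
        have : (1:ℝ) ≤ B / A := (one_le_div hA).mpr hAB
        positivity
      rcases n with _ | n'
      · omega
      have hm'n' : m' ≤ n' := by omega
      calc ‖∑ j ∈ Finset.range (m'+1), c j • b j‖
          ≤ B * sbNorm c m' := (h c m').2
        _ ≤ B * sbNorm c n' := mul_le_mul_of_nonneg_left (sbNorm_mono c hm'n') hB0
        _ = (B / A) * (A * sbNorm c n') := by field_simp
        _ ≤ (B / A) * ‖∑ j ∈ Finset.range (n'+1), c j • b j‖ :=
            mul_le_mul_of_nonneg_left (h c n').1 (div_nonneg hB0 hA.le)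
    · intro c n
      rcases n with _ | m
      · simp
      have h1 : |∑ j ∈ Finset.range (m+1), c j| ≤ sbNorm c m :=
        abs_le_sbNorm c (by omega)
      have h2 : A * sbNorm c m ≤ ‖∑ j ∈ Finset.range (m+1), c j • b j‖ := (h c m).1
      calc |∑ j ∈ Finset.range (m+1), c j| ≤ sbNorm c m := h1
        _ = A⁻¹ * (A * sbNorm c m) := by field_simp
        _ ≤ A⁻¹ * ‖∑ j ∈ Finset.range (m+1), c j • b j‖ :=
            mul_le_mul_of_nonneg_left h2 (inv_nonneg.mpr hA.le)
  · -- backward direction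
    rintro ⟨hduc, hwc, ⟨C, hC1, hne, hproj⟩, ⟨β, hβ⟩⟩
    -- β is positive
    have hβpos : 0 < β := by
      have h1 := hβ (fun i => if i = 0 then (1:ℝ) else 0) 1
      simp at h1
      have hb0 : 0 < ‖b 0‖ := norm_pos_iff.mpr (hne 0)
      nlinarith
    have hC0 : (0:ℝ) < C := lt_of_lt_of_le one_pos hC1
    -- Banach–Steinhaus: uniform bound on coefficient-bounded sums of diffSeq b
    set e : ℕ → X := diffSeq b with he
    let ι := {p : (ℕ → ℝ) × ℕ // ∀ j, |p.1 j| ≤ 1}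
    let v : ι → X := fun p => ∑ j ∈ Finset.range p.1.2, p.1.1 j • e j
    let g : ι → StrongDual ℝ X →L[ℝ] ℝ := fun p =>
      NormedSpace.inclusionInDoubleDual ℝ X (v p)
    have hpt : ∀ f : StrongDual ℝ X, ∃ Cf, ∀ p : ι, ‖g p f‖ ≤ Cf := by
      intro f
      refine ⟨∑' j, |f (e j)|, fun p => ?_⟩
      have hsum : Summable fun j => |f (e j)| := hduc f
      calc ‖g p f‖ = |f (v p)| := by
            rw [NormedSpace.dual_def]; exact Real.norm_eq_abs _
        _ = |∑ j ∈ Finset.range p.1.2, p.1.1 j * f (e j)| := by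
            rw [map_sum]
            congr 1
            exact Finset.sum_congr rfl fun j _ => by rw [map_smul, smul_eq_mul]
        _ ≤ ∑ j ∈ Finset.range p.1.2, |p.1.1 j * f (e j)| :=
            Finset.abs_sum_le_sum_abs _ _
        _ ≤ ∑ j ∈ Finset.range p.1.2, |f (e j)| := by
            refine Finset.sum_le_sum fun j _ => ?_
            rw [abs_mul]
            calc |p.1.1 j| * |f (e j)| ≤ 1 * |f (e j)| :=
                  mul_le_mul_of_nonneg_right (p.2 j) (abs_nonneg _)
              _ = |f (e j)| := one_mul _
        _ ≤ ∑' j, |f (e j)| :=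
            hsum.sum_le_tsum _ (fun j _ => abs_nonneg _)
    obtain ⟨K, hK⟩ := banach_steinhaus hpt
    have hnormg : ∀ p : ι, ‖v p‖ ≤ K := by
      intro p
      have : ‖g p‖ = ‖v p‖ :=
        (NormedSpace.inclusionInDoubleDualLi ℝ (E := X)).norm_map (v p)
      rw [← this]; exact hK p
    have hK0 : 0 ≤ K := le_trans (norm_nonneg (v ⟨(fun _ => 0, 0), fun j => by simp⟩))
      (hnormg _)
    -- bounded coefficients give norm bound r * K
    have hscale : ∀ (d : ℕ → ℝ) (r : ℝ) (n : ℕ), 0 < r → (∀ j, |d j| ≤ r) →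
        ‖∑ j ∈ Finset.range n, d j • e j‖ ≤ r * K := by
      intro d r n hr hd
      have ha : ∀ j, |r⁻¹ * d j| ≤ 1 := by
        intro j
        rw [abs_mul, abs_of_nonneg (inv_nonneg.mpr hr.le)]
        calc r⁻¹ * |d j| ≤ r⁻¹ * r := mul_le_mul_of_nonneg_left (hd j) (inv_nonneg.mpr hr.le)
          _ = 1 := inv_mul_cancel₀ hr.ne'
      have hv := hnormg ⟨(fun j => r⁻¹ * d j, n), ha⟩
      have hveq : v ⟨(fun j => r⁻¹ * d j, n), ha⟩
          = r⁻¹ • ∑ j ∈ Finset.range n, d j • e j := by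
        simp [v, Finset.smul_sum, smul_smul]
      rw [hveq, norm_smul, Real.norm_eq_abs, abs_of_nonneg (inv_nonneg.mpr hr.le)] at hv
      calc ‖∑ j ∈ Finset.range n, d j • e j‖
          = r * (r⁻¹ * ‖∑ j ∈ Finset.range n, d j • e j‖) := by
            rw [← mul_assoc, mul_inv_cancel₀ hr.ne', one_mul]
        _ ≤ r * K := mul_le_mul_of_nonneg_left hv hr.le
    refine ⟨(β * C)⁻¹, 2 * K, by positivity, fun c n => ?_⟩
    constructor
    · -- lower bound
      have hsb : sbNorm c n ≤ β * C * ‖∑ j ∈ Finset.range (n+1), c j • b j‖ := by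
        apply sbNorm_le'
        intro m hm
        calc |∑ j ∈ Finset.range m, c j| ≤ β * ‖∑ j ∈ Finset.range m, c j • b j‖ := hβ c m
          _ ≤ β * (C * ‖∑ j ∈ Finset.range (n+1), c j • b j‖) :=
              mul_le_mul_of_nonneg_left (hproj c m (n+1) (by omega)) hβpos.le
          _ = β * C * ‖∑ j ∈ Finset.range (n+1), c j • b j‖ := by ring
      calc (β * C)⁻¹ * sbNorm c n
          ≤ (β * C)⁻¹ * (β * C * ‖∑ j ∈ Finset.range (n+1), c j • b j‖) :=
            mul_le_mul_of_nonneg_left hsb (by positivity)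
        _ = ‖∑ j ∈ Finset.range (n+1), c j • b j‖ :=
            inv_mul_cancel_left₀ (by positivity) _
    · -- upper bound
      set t := sbNorm c n with ht
      have ht0 : 0 ≤ t := sbNorm_nonneg' c n
      set d : ℕ → ℝ := fun i => ∑ j ∈ Finset.Ico i (n+1), c j with hdd
      have habel := abel_sum b c (n+1)
      have hdbound : ∀ i, |d i| ≤ 2 * t := by
        intro i
        by_cases hi : i ≤ n + 1
        · have : d i = (∑ j ∈ Finset.range (n+1), c j) - ∑ j ∈ Finset.range i, c j :=
            Finset.sum_Ico_eq_sub _ hi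
          rw [this]
          have h1 : |∑ j ∈ Finset.range (n+1), c j| ≤ t := abs_le_sbNorm c (by omega)
          have h2 : |∑ j ∈ Finset.range i, c j| ≤ t := abs_le_sbNorm c (by omega)
          calc |(∑ j ∈ Finset.range (n+1), c j) - ∑ j ∈ Finset.range i, c j|
              ≤ |∑ j ∈ Finset.range (n+1), c j| + |∑ j ∈ Finset.range i, c j| := by
                rw [sub_eq_add_neg]
                exact (abs_add_le _ _).trans (by rw [abs_neg])
            _ ≤ 2 * t := by linarith
        · have : d i = 0 := by
            simp only [hdd]
            rw [Finset.Ico_eq_empty (by omega), Finset.sum_empty]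
          rw [this, abs_zero]; linarith
      rcases eq_or_lt_of_le ht0 with ht0' | htpos
      · -- sbNorm is zero: the vector sum vanishes
        have hzero : ∑ j ∈ Finset.range (n+1), c j • b j = 0 := by
          rw [habel]
          refine Finset.sum_eq_zero fun i _ => ?_
          have h' : |d i| ≤ 0 := by
            have := hdbound i; rw [← ht0'] at this; linarith
          have hdi : d i = 0 := abs_eq_zero.mp (le_antisymm h' (abs_nonneg _))
          rw [show (∑ j ∈ Finset.Ico i (n+1), c j) = d i from rfl, hdi, zero_smul]
        rw [hzero, norm_zero, ← ht0']
        simp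
      · rw [habel]
        have := hscale d (2 * t) (n+1) (by linarith) hdbound
        calc ‖∑ i ∈ Finset.range (n+1), (∑ j ∈ Finset.Ico i (n+1), c j) • e i‖
            ≤ 2 * t * K := this
          _ = 2 * K * t := by ring
end

section
/- Every non-weakly-convergent DUC-sequence in a Banach space has a subsequence equivalent to the summing basis; in particular, if a Banach space contains a non-weakly-convergent DUC-sequence, then it contains an isomorphic copy of c_0. -/
open Filter Finset

open NormedSpace

section Aux

variable {X : Type*} [NormedAddCommGroup X] [NormedSpace ℝ X]

/-- Uniform bound for finite signed sums coming from a WUC-type hypothesis. -/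
lemma wuc_bound [CompleteSpace X] (x : ℕ → X)
    (h : ∀ f : X →L[ℝ] ℝ, Summable (fun j => |f (x j)|)) :
    ∃ C : ℝ, 0 ≤ C ∧ ∀ (f : X →L[ℝ] ℝ) (n : ℕ),
      ∑ j ∈ Finset.range n, |f (x j)| ≤ C * ‖f‖ := by
  have hpt : ∀ f : X →L[ℝ] ℝ, ∃ C, ∀ p : ℕ × (ℕ → Bool),
      ‖(inclusionInDoubleDual ℝ X (∑ j ∈ Finset.range p.1, (if p.2 j then (1:ℝ) else -1) • x j)) f‖ ≤ C := by
    intro f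
    refine ⟨∑' j, |f (x j)|, fun p => ?_⟩
    rw [dual_def, map_sum, Real.norm_eq_abs]
    calc |∑ j ∈ Finset.range p.1, f ((if p.2 j then (1:ℝ) else -1) • x j)|
        ≤ ∑ j ∈ Finset.range p.1, |f ((if p.2 j then (1:ℝ) else -1) • x j)| :=
          Finset.abs_sum_le_sum_abs _ _
      _ = ∑ j ∈ Finset.range p.1, |f (x j)| := by
          refine Finset.sum_congr rfl fun j _ => ?_
          rw [map_smul, smul_eq_mul, abs_mul]
          by_cases hj : p.2 j = true <;> simp [hj]
      _ ≤ ∑' j, |f (x j)| := Summable.sum_le_tsum _ (fun i _ => abs_nonneg _) (h f)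
  obtain ⟨C', hC'⟩ := banach_steinhaus hpt
  refine ⟨max C' 0, le_max_right _ _, fun f n => ?_⟩
  set σ : ℕ → Bool := fun j => decide (0 ≤ f (x j)) with hσ
  have key : ∑ j ∈ Finset.range n, |f (x j)|
      = (inclusionInDoubleDual ℝ X
          (∑ j ∈ Finset.range n, (if σ j then (1:ℝ) else -1) • x j)) f := by
    rw [dual_def, map_sum]
    refine Finset.sum_congr rfl fun j _ => ?_
    rw [map_smul, smul_eq_mul]
    by_cases hj : 0 ≤ f (x j)
    · simp [hσ, hj, abs_of_nonneg hj]
    · rw [abs_of_neg (lt_of_not_ge hj)]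
      simp only [hσ, hj, decide_eq_true_eq, if_false]
      ring
  rw [key]
  calc (inclusionInDoubleDual ℝ X
          (∑ j ∈ Finset.range n, (if σ j then (1:ℝ) else -1) • x j)) f
      ≤ ‖(inclusionInDoubleDual ℝ X
          (∑ j ∈ Finset.range n, (if σ j then (1:ℝ) else -1) • x j)) f‖ := le_abs_self _
    _ ≤ ‖inclusionInDoubleDual ℝ X
          (∑ j ∈ Finset.range n, (if σ j then (1:ℝ) else -1) • x j)‖ * ‖f‖ :=
        ContinuousLinearMap.le_opNorm _ _
    _ ≤ C' * ‖f‖ := by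
        exact mul_le_mul_of_nonneg_right (hC' (n, σ)) (norm_nonneg f)
    _ ≤ max C' 0 * ‖f‖ := mul_le_mul_of_nonneg_right (le_max_left _ _) (norm_nonneg f)

/-- Near-norming functionals for elements of the double dual. -/
lemma exists_norming (ψ : StrongDual ℝ (StrongDual ℝ X)) {ε : ℝ} (hε : 0 < ε) :
    ∃ f : StrongDual ℝ X, ‖f‖ ≤ 1 ∧ ‖ψ‖ - ε < ψ f := by
  by_contra hcon
  push_neg at hcon
  have h1 : ∀ f : StrongDual ℝ X, ‖f‖ ≤ 1 → |ψ f| ≤ ‖ψ‖ - ε := by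
    intro f hf
    refine abs_le.2 ⟨?_, hcon f hf⟩
    have := hcon (-f) (by rwa [norm_neg])
    rw [map_neg] at this
    linarith
  have h0 : (0:ℝ) ≤ ‖ψ‖ - ε := by
    have := h1 0 (by simp)
    simpa using (abs_nonneg (ψ 0)).trans this
  have : ‖ψ‖ ≤ ‖ψ‖ - ε := by
    refine ContinuousLinearMap.opNorm_le_bound _ h0 fun f => ?_
    rcases eq_or_ne f 0 with rfl | hf
    · simp
    · have hnf : (0:ℝ) < ‖f‖ := norm_pos_iff.2 hf
      have hg : ‖(‖f‖⁻¹ • f : StrongDual ℝ X)‖ ≤ 1 := by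
        rw [norm_smul, norm_inv, norm_norm, inv_mul_cancel₀ hnf.ne']
      have := h1 _ hg
      rw [map_smul, smul_eq_mul, abs_mul, abs_inv, abs_norm] at this
      rw [Real.norm_eq_abs]
      calc |ψ f| = ‖f‖ * (‖f‖⁻¹ * |ψ f|) := by field_simp
        _ ≤ ‖f‖ * (‖ψ‖ - ε) := by
            exact mul_le_mul_of_nonneg_left this (norm_nonneg f)
        _ = (‖ψ‖ - ε) * ‖f‖ := by ring
  linarith

/-- One step of the Mazur basic-sequence selection, abstractly: `Y` is a normed
space, `W` a separating family of functionals which nearly norm every vector and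
on which the sequence `ψ` tends to zero. -/
lemma mazur_step {Y : Type*} [NormedAddCommGroup Y] [NormedSpace ℝ Y]
    (W : Set (Y →L[ℝ] ℝ))
    (hWnorm : ∀ (y : Y), ∀ ε > (0:ℝ), ∃ φ ∈ W, ‖φ‖ ≤ 1 ∧ ‖y‖ - ε < φ y)
    (d : ℝ) (hd : 0 < d) (ψ : ℕ → Y)
    (hlow : ∀ n, d ≤ ‖ψ n‖)
    (hnull : ∀ φ ∈ W, Tendsto (fun n => φ (ψ n)) atTop (nhds 0))
    (G : Submodule ℝ Y) [FiniteDimensional ℝ G]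
    {η : ℝ} (hη : 0 < η) (hη1 : η ≤ 1) :
    ∃ N, ∀ n ≥ N, ∀ g ∈ G, ∀ t : ℝ, ‖g‖ ≤ (1 + η) * ‖g + t • ψ n‖ := by
  classical
  haveI : ProperSpace G := FiniteDimensional.proper ℝ G
  set S : Set Y := Subtype.val '' (Metric.sphere (0 : G) 1) with hS
  have hScomp : IsCompact S := (isCompact_sphere (0 : G) 1).image continuous_subtype_val
  obtain ⟨T, hTS, hTfin, hcover⟩ := hScomp.finite_cover_balls (e := η/8) (by positivity)
  have hTnorm : ∀ g ∈ T, ‖g‖ = 1 ∧ g ∈ G := by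
    intro g hg
    obtain ⟨g', hg', rfl⟩ := hTS hg
    rw [Metric.mem_sphere, dist_zero_right] at hg'
    exact ⟨hg', g'.2⟩
  -- choose near-norming functionals
  have hch : ∀ g : Y, ∃ φ : Y →L[ℝ] ℝ, φ ∈ W ∧ ‖φ‖ ≤ 1 ∧
      (g ∈ T → 1 - η/8 < φ g) := by
    intro g
    by_cases hg : g ∈ T
    · obtain ⟨φ, hφW, hφ1, hφ2⟩ := hWnorm g (η/8) (by positivity)
      exact ⟨φ, hφW, hφ1, fun _ => by rw [(hTnorm g hg).1] at hφ2; exact hφ2⟩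
    · obtain ⟨φ, hφW, hφ1, _⟩ := hWnorm 0 (η/8) (by positivity)
      exact ⟨φ, hφW, hφ1, fun h => absurd h hg⟩
  choose F hFW hF1 hF2 using hch
  -- eventual smallness
  have hev : ∀ᶠ n in atTop, ∀ g ∈ T, |F g (ψ n)| ≤ η * d / 16 := by
    rw [hTfin.eventually_all]
    intro g _
    have h1 : Tendsto (fun n => |F g (ψ n)|) atTop (nhds 0) := by
      simpa using (hnull (F g) (hFW g)).abs
    exact h1.eventually_le_const (by positivity)
  obtain ⟨N, hN⟩ := eventually_atTop.1 hev
  refine ⟨N, fun n hn g hgG t => ?_⟩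
  -- the unit-norm case
  have unit : ∀ g ∈ G, ‖g‖ = 1 → ∀ t : ℝ, 1 ≤ (1 + η) * ‖g + t • ψ n‖ := by
    intro g hgG hgnorm t
    rcases le_or_gt (2/d) |t| with ht | ht
    · have h1 : ‖t • ψ n‖ ≤ ‖g + t • ψ n‖ + ‖g‖ := by
        have := norm_sub_le (g + t • ψ n) g
        simpa using this
      have h2 : (2:ℝ) ≤ ‖t • ψ n‖ := by
        rw [norm_smul, Real.norm_eq_abs]
        calc (2:ℝ) = (2/d) * d := by field_simp
          _ ≤ |t| * ‖ψ n‖ := mul_le_mul ht (hlow n) hd.le (abs_nonneg t)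
      have h3 : 1 ≤ ‖g + t • ψ n‖ := by rw [hgnorm] at h1; linarith
      nlinarith [norm_nonneg (g + t • ψ n)]
    · have hgS : g ∈ S := ⟨⟨g, hgG⟩, by simpa [Metric.mem_sphere] using hgnorm, rfl⟩
      obtain ⟨g₀, hg₀T, hgball⟩ := Set.mem_iUnion₂.1 (hcover hgS)
      rw [Metric.mem_ball, dist_eq_norm] at hgball
      have hf1 := hF1 g₀
      have hf2 := hF2 g₀ hg₀T
      have hsmall := hN n hn g₀ hg₀T
      have heval : 1 - 3*η/8 ≤ F g₀ (g + t • ψ n) := by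
        have e1 : |F g₀ g - F g₀ g₀| ≤ η/8 := by
          rw [← map_sub]
          calc |F g₀ (g - g₀)| ≤ ‖F g₀‖ * ‖g - g₀‖ := (F g₀).le_opNorm _
            _ ≤ 1 * (η/8) := mul_le_mul hf1 hgball.le (norm_nonneg _) zero_le_one
            _ = η/8 := one_mul _
        have e2 : |t * F g₀ (ψ n)| ≤ η/8 := by
          rw [abs_mul]
          calc |t| * |F g₀ (ψ n)| ≤ (2/d) * (η * d / 16) :=
                mul_le_mul ht.le hsmall (abs_nonneg _) (by positivity)
            _ = η/8 := by field_simp; ring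
        have e3 : F g₀ (g + t • ψ n) = F g₀ g₀ + (F g₀ g - F g₀ g₀) + t * F g₀ (ψ n) := by
          rw [map_add, map_smul, smul_eq_mul]; ring
        rw [e3]
        have i1 := abs_le.1 e1
        have i2 := abs_le.1 e2
        linarith
      have hnorm : F g₀ (g + t • ψ n) ≤ ‖g + t • ψ n‖ := by
        calc F g₀ (g + t • ψ n) ≤ |F g₀ (g + t • ψ n)| := le_abs_self _
          _ ≤ ‖F g₀‖ * ‖g + t • ψ n‖ := (F g₀).le_opNorm _
          _ ≤ 1 * ‖g + t • ψ n‖ := mul_le_mul_of_nonneg_right hf1 (norm_nonneg _)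
          _ = ‖g + t • ψ n‖ := one_mul _
      nlinarith
  rcases eq_or_ne g 0 with rfl | hg0
  · have h0 : (0:ℝ) ≤ (1+η) * ‖(0:Y) + t • ψ n‖ := by positivity
    simpa using h0
  · have hr : (0:ℝ) < ‖g‖ := norm_pos_iff.2 hg0
    have hmem : (‖g‖⁻¹ • g) ∈ G := G.smul_mem _ hgG
    have hnorm1 : ‖(‖g‖⁻¹ • g)‖ = 1 := by
      rw [norm_smul, norm_inv, norm_norm, inv_mul_cancel₀ hr.ne']
    have hu := unit _ hmem hnorm1 (‖g‖⁻¹ * t)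
    have heq : (‖g‖⁻¹ • g) + (‖g‖⁻¹ * t) • ψ n = ‖g‖⁻¹ • (g + t • ψ n) := by
      rw [smul_add, smul_smul]
    rw [heq, norm_smul, norm_inv, norm_norm] at hu
    calc ‖g‖ = ‖g‖ * 1 := (mul_one _).symm
      _ ≤ ‖g‖ * ((1 + η) * (‖g‖⁻¹ * ‖g + t • ψ n‖)) := mul_le_mul_of_nonneg_left hu hr.le
      _ = (1 + η) * ‖g + t • ψ n‖ := by field_simp

end Aux

lemma prod_bound : ∀ m : ℕ, ∏ i ∈ Finset.range m, (1 + ((4:ℝ)⁻¹)^(i+1)) ≤ 2 - ((4:ℝ)⁻¹)^m := by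
  intro m
  induction m with
  | zero => norm_num
  | succ m ih =>
    rw [Finset.prod_range_succ, pow_succ]
    have hq : (0:ℝ) < ((4:ℝ)⁻¹)^m := by positivity
    have hq1 : ((4:ℝ)⁻¹)^m ≤ 1 := pow_le_one₀ (by norm_num) (by norm_num)
    have hP : (0:ℝ) ≤ ∏ i ∈ Finset.range m, (1 + ((4:ℝ)⁻¹)^(i+1)) := by
      apply Finset.prod_nonneg; intro i _; positivity
    nlinarith [ih]

lemma diffSeq_sum {X : Type*} [NormedAddCommGroup X] [NormedSpace ℝ X] (b : ℕ → X) (n : ℕ) :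
    ∑ j ∈ Finset.range (n+1), diffSeq b j = b n := by
  induction n with
  | zero => simp [diffSeq]
  | succ n ih =>
    rw [Finset.sum_range_succ, ih]
    simp only [diffSeq, Nat.succ_ne_zero, if_false, Nat.succ_sub_one]
    abel

lemma swap_sum {X : Type*} [NormedAddCommGroup X] [NormedSpace ℝ X]
    (x : ℕ → X) (k : ℕ → ℕ) (hk : Monotone k) (c : ℕ → ℝ) (n : ℕ) :
    ∑ j ∈ Finset.range (n+1), c j • (∑ i ∈ Finset.range (k j + 1), x i) =
    ∑ i ∈ Finset.range (k n + 1),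
      (∑ j ∈ (Finset.range (n+1)).filter (fun j => i ≤ k j), c j) • x i := by
  classical
  have h1 : ∀ j ∈ Finset.range (n+1), c j • (∑ i ∈ Finset.range (k j + 1), x i)
      = ∑ i ∈ Finset.range (k n + 1), (if i ≤ k j then c j else 0) • x i := by
    intro j hj
    rw [Finset.smul_sum]
    have hsub : Finset.range (k j + 1) ⊆ Finset.range (k n + 1) := by
      apply Finset.range_subset_range.2
      have := hk (Nat.lt_succ_iff.1 (Finset.mem_range.1 hj))
      omega
    rw [← Finset.sum_subset hsub (fun i hi hni => ?_)]
    · exact Finset.sum_congr rfl fun i hi => by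
        rw [if_pos (Nat.lt_succ_iff.1 (Finset.mem_range.1 hi))]
    · rw [Finset.mem_range] at hi hni
      rw [if_neg (by omega), zero_smul]
  rw [Finset.sum_congr rfl h1, Finset.sum_comm]
  refine Finset.sum_congr rfl fun i _ => ?_
  rw [← Finset.sum_smul, Finset.sum_filter]

set_option maxHeartbeats 1000000

noncomputable instance tripleDualNorm {X : Type*} [NormedAddCommGroup X] [NormedSpace ℝ X] :
    Norm (StrongDual ℝ (StrongDual ℝ X) →L[ℝ] ℝ) :=
  @ContinuousLinearMap.hasOpNorm ℝ ℝ (StrongDual ℝ (StrongDual ℝ X)) ℝ _ _ _ _ _ _ (RingHom.id ℝ)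

instance ddNormSMulClass {X : Type*} [NormedAddCommGroup X] [NormedSpace ℝ X] :
    NormSMulClass ℝ (StrongDual ℝ (StrongDual ℝ X)) :=
  @NormedSpace.toNormSMulClass ℝ (StrongDual ℝ (StrongDual ℝ X)) _ _ _

/-- every non-weakly-convergent DUC-sequence has a subsequence
equivalent to the summing basis; in particular the space contains a sequence
equivalent to the unit vector basis of c₀ (an isomorphic copy of c₀). -/
theorem stmt13 {X : Type*} [NormedAddCommGroup X] [NormedSpace ℝ X] [CompleteSpace X]
    (b : ℕ → X) (hb : DUC b) (hnw : ¬ ∃ x : X, WeakConvTo b x) :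
    (∃ k : ℕ → ℕ, StrictMono k ∧ EquivSummingBasis (b ∘ k)) ∧
    ∃ u : ℕ → X, ∃ A Bc : ℝ, 0 < A ∧ ∀ (c : ℕ → ℝ) (n : ℕ),
      A * (Finset.range (n + 1)).sup' ⟨0, Finset.mem_range.mpr (Nat.succ_pos n)⟩
            (fun j => |c j|) ≤
          ‖∑ j ∈ Finset.range (n + 1), c j • u j‖ ∧
      ‖∑ j ∈ Finset.range (n + 1), c j • u j‖ ≤
        Bc * (Finset.range (n + 1)).sup' ⟨0, Finset.mem_range.mpr (Nat.succ_pos n)⟩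
            (fun j => |c j|) := by
  classical
  set x : ℕ → X := diffSeq b with hx
  have hW : ∀ f : X →L[ℝ] ℝ, Summable (fun j => |f (x j)|) := hb
  obtain ⟨C, hC0, hC⟩ := wuc_bound x hW
  set J : X →L[ℝ] StrongDual ℝ (StrongDual ℝ X) := inclusionInDoubleDual ℝ X with hJ
  have hJnorm : ∀ y : X, ‖J y‖ = ‖y‖ := fun y =>
    (inclusionInDoubleDualLi ℝ (E := X)).norm_map y
  have hsf : ∀ f : X →L[ℝ] ℝ, Summable (fun j => f (x j)) := fun f => (hW f).of_abs
  have hfb : ∀ (f : X →L[ℝ] ℝ) (n : ℕ), f (b n) = ∑ j ∈ Finset.range (n+1), f (x j) := by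
    intro f n
    rw [← map_sum, diffSeq_sum]
  have htsum_le : ∀ f : X →L[ℝ] ℝ, ∑' j, |f (x j)| ≤ C * ‖f‖ := by
    intro f
    exact Summable.tsum_le_of_sum_range_le (hW f) (fun n => hC f n)
  -- the weak* limit L
  set L : StrongDual ℝ (StrongDual ℝ X) :=
    LinearMap.mkContinuous
      { toFun := fun f => ∑' j, f (x j)
        map_add' := by
          intro f g
          simp only [ContinuousLinearMap.add_apply]
          exact Summable.tsum_add (hsf f) (hsf g)
        map_smul' := by
          intro r f
          simp only [ContinuousLinearMap.smul_apply, smul_eq_mul, RingHom.id_apply]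
          exact Summable.tsum_const_smul r (hsf f) }
      C
      (by
        intro f
        simp only [LinearMap.coe_mk, AddHom.coe_mk, Real.norm_eq_abs]
        calc |∑' j, f (x j)| ≤ ∑' j, |f (x j)| := by
              have hs : Summable (fun j => ‖f (x j)‖) := by
                simpa only [Real.norm_eq_abs] using hW f
              have h2 := norm_tsum_le_tsum_norm hs
              simpa only [Real.norm_eq_abs] using h2
          _ ≤ C * ‖f‖ := htsum_le f) with hL
  have hLapp : ∀ f : X →L[ℝ] ℝ, L f = ∑' j, f (x j) := fun f => rfl
  have hLlim : ∀ f : X →L[ℝ] ℝ, Tendsto (fun n => f (b n)) atTop (nhds (L f)) := by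
    intro f
    have h1 := (hsf f).hasSum.tendsto_sum_nat
    have h2 : Tendsto (fun n => ∑ j ∈ Finset.range (n+1), f (x j)) atTop (nhds (L f)) := by
      rw [hLapp]
      exact h1.comp (tendsto_add_atTop_nat 1)
    refine h2.congr fun n => (hfb f n).symm
  have hLnotin : L ∉ Set.range J := by
    rintro ⟨y, hy⟩
    exact hnw ⟨y, fun f => by
      have := hLlim f
      rwa [← hy] at this⟩
  have hclosed : IsClosed (Set.range J) := by
    have hiso : Isometry (J : X → StrongDual ℝ (StrongDual ℝ X)) :=
      (inclusionInDoubleDualLi ℝ (E := X)).isometry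
    exact hiso.isClosedEmbedding.isClosed_range
  set d : ℝ := Metric.infDist L (Set.range J) with hd_def
  have hd : 0 < d := (hclosed.notMem_iff_infDist_pos (⟨J 0, 0, rfl⟩ : (Set.range J).Nonempty)).1 hLnotin
  have hdist : ∀ (t : ℝ) (y : X), |t| * d ≤ ‖t • L + J y‖ := by
    intro t y
    rcases eq_or_ne t 0 with rfl | ht
    · simp [norm_nonneg (E := StrongDual ℝ (StrongDual ℝ X))]
    · have h1 : d ≤ dist L (J (-(t⁻¹ • y))) :=
        Metric.infDist_le_dist_of_mem ⟨-(t⁻¹ • y), rfl⟩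
      rw [dist_eq_norm (E := StrongDual ℝ (StrongDual ℝ X)), map_neg, map_smul, sub_neg_eq_add] at h1
      have h2 : t • (L + t⁻¹ • J y) = t • L + J y := by
        rw [smul_add, smul_smul, mul_inv_cancel₀ ht, one_smul]
      calc |t| * d ≤ |t| * ‖L + t⁻¹ • J y‖ := by
            exact mul_le_mul_of_nonneg_left h1 (abs_nonneg t)
        _ = ‖t • (L + t⁻¹ • J y)‖ := by rw [norm_smul, Real.norm_eq_abs]
        _ = ‖t • L + J y‖ := by rw [h2]
  -- the weak*-null sequence
  set ψ : ℕ → StrongDual ℝ (StrongDual ℝ X) := fun m => J (b m) - L with hψ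
  have hψlow : ∀ m, d ≤ ‖ψ m‖ := by
    intro m
    have h1 : d ≤ dist L (J (b m)) := Metric.infDist_le_dist_of_mem ⟨b m, rfl⟩
    rw [dist_eq_norm (E := StrongDual ℝ (StrongDual ℝ X)), ← norm_neg (E := StrongDual ℝ (StrongDual ℝ X))] at h1
    exact h1.trans_eq (by rw [norm_neg (E := StrongDual ℝ (StrongDual ℝ X)), norm_sub_rev (E := StrongDual ℝ (StrongDual ℝ X))])
  have hψapp : ∀ m (f : X →L[ℝ] ℝ), ψ m f = f (b m) - L f := by
    intro m f; simp [hψ, hJ, ContinuousLinearMap.sub_apply]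
  -- the norming family
  set W : Set (StrongDual ℝ (StrongDual ℝ X) →L[ℝ] ℝ) :=
    Set.range (inclusionInDoubleDual ℝ (StrongDual ℝ X)) with hWdef
  have hWnorm : ∀ (y : StrongDual ℝ (StrongDual ℝ X)), ∀ ε > (0:ℝ), ∃ φ ∈ W, ‖φ‖ ≤ 1 ∧ ‖y‖ - ε < φ y := by
    intro y ε hε
    obtain ⟨f, hf1, hf2⟩ := exists_norming y hε
    refine ⟨inclusionInDoubleDual ℝ (StrongDual ℝ X) f, ⟨f, rfl⟩, ?_, ?_⟩
    · exact le_trans (double_dual_bound ℝ (StrongDual ℝ X) f) hf1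
    · simpa using hf2
  have hψnull : ∀ φ ∈ W, Tendsto (fun m => φ (ψ m)) atTop (nhds 0) := by
    rintro φ ⟨f, rfl⟩
    have h1 : Tendsto (fun m => f (b m) - L f) atTop (nhds (L f - L f)) :=
      (hLlim f).sub_const (L f)
    rw [sub_self] at h1
    refine h1.congr fun m => ?_
    simp [hψapp]
  -- Mazur recursion
  set Gm : (ℕ → ℕ) → ℕ → Submodule ℝ (StrongDual ℝ (StrongDual ℝ X)) := fun prev m =>
    Submodule.span ℝ (insert L ((fun i => ψ (prev i)) '' Set.Iio m)) with hGm
  have hstep : ∀ (m : ℕ) (prev : ℕ → ℕ), ∃ N, ∀ n ≥ N, ∀ g ∈ Gm prev m, ∀ t : ℝ,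
      ‖g‖ ≤ (1 + ((4:ℝ)⁻¹)^(m+1)) * ‖g + t • ψ n‖ := by
    intro m prev
    exact @mazur_step _ _ _ W hWnorm d hd ψ hψlow hψnull (Gm prev m)
      (FiniteDimensional.span_of_finite ℝ (((Set.finite_Iio m).image _).insert L)) (((4:ℝ)⁻¹)^(m+1))
      (by positivity) (pow_le_one₀ (by norm_num) (by norm_num))
  choose F hF using hstep
  set pre : ℕ → ℕ → ℕ := fun m => Nat.rec (fun _ => F 0 id)
    (fun m prevf => fun i => if i ≤ m then prevf i else max (F (m+1) prevf) (prevf m + 1)) m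
    with hpre
  have pre_succ : ∀ m i, pre (m+1) i
      = if i ≤ m then pre m i else max (F (m+1) (pre m)) (pre m m + 1) := fun m i => rfl
  set k : ℕ → ℕ := fun m => pre m m with hk
  have agree : ∀ m i, i ≤ m → pre m i = k i := by
    intro m
    induction m with
    | zero =>
      intro i hi
      interval_cases i
      rfl
    | succ m ih =>
      intro i hi
      by_cases h : i ≤ m
      · rw [pre_succ, if_pos h, ih i h]
      · have : i = m+1 := by omega
        subst this
        rfl
  have hkmono : StrictMono k := by
    apply strictMono_nat_of_lt_succ
    intro m
    have h1 : k (m+1) = max (F (m+1) (pre m)) (pre m m + 1) := by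
      show pre (m+1) (m+1) = _
      rw [pre_succ, if_neg (by omega)]
    rw [h1]
    exact lt_of_lt_of_le (Nat.lt_succ_self _) (le_max_right _ _)
  have hkey : ∀ m, ∀ g ∈ Gm k m, ∀ t : ℝ,
      ‖g‖ ≤ (1 + ((4:ℝ)⁻¹)^(m+1)) * ‖g + t • ψ (k m)‖ := by
    intro m
    cases m with
    | zero =>
      have hGeq : Gm k 0 = Gm id 0 := by
        have h0 : Set.Iio (0:ℕ) = ∅ := by ext i; simp
        simp [hGm, h0]
      rw [hGeq]
      exact hF 0 id (k 0) le_rfl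
    | succ m =>
      have hGeq : Gm k (m+1) = Gm (pre m) (m+1) := by
        simp only [hGm]
        congr 1
        apply congrArg (insert L)
        apply Set.image_congr
        intro i hi
        rw [agree m i (Nat.lt_succ_iff.1 hi)]
      rw [hGeq]
      refine hF (m+1) (pre m) (k (m+1)) ?_
      have h1 : k (m+1) = max (F (m+1) (pre m)) (pre m m + 1) := by
        show pre (m+1) (m+1) = _
        rw [pre_succ, if_neg (by omega)]
      rw [h1]
      exact le_max_left _ _
  -- the candidate basic sequence in the double dual
  set ζ : ℕ → StrongDual ℝ (StrongDual ℝ X) := fun i => Nat.casesOn i L (fun i => ψ (k i)) with hζ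
  have hζs : ∀ i, ζ (i+1) = ψ (k i) := fun i => rfl
  have hchain : ∀ (a : ℕ → ℝ) (m : ℕ),
      ‖∑ i ∈ Finset.range (m+1), a i • ζ i‖
        ≤ (1 + ((4:ℝ)⁻¹)^(m+1)) * ‖∑ i ∈ Finset.range (m+2), a i • ζ i‖ := by
    intro a m
    have hmem : (∑ i ∈ Finset.range (m+1), a i • ζ i) ∈ Gm k m := by
      apply Submodule.sum_mem
      intro i hi
      apply Submodule.smul_mem
      apply Submodule.subset_span
      cases i with
      | zero => exact Set.mem_insert _ _
      | succ i =>
        refine Set.mem_insert_of_mem _ ⟨i, ?_, rfl⟩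
        rw [Set.mem_Iio]
        exact Nat.lt_of_succ_lt_succ (Finset.mem_range.1 hi)
    have h := hkey m _ hmem (a (m+1))
    have h2 : (∑ i ∈ Finset.range (m+2), a i • ζ i)
        = (∑ i ∈ Finset.range (m+1), a i • ζ i) + a (m+1) • ψ (k m) := by
      rw [Finset.sum_range_succ]
    rw [h2]
    exact h
  have hprod : ∀ (a : ℕ → ℝ) (j p : ℕ),
      ‖∑ i ∈ Finset.range (p+1), a i • ζ i‖
        ≤ (∏ i ∈ Finset.range j, (1 + ((4:ℝ)⁻¹)^(p+i+1)))
            * ‖∑ i ∈ Finset.range (p+1+j), a i • ζ i‖ := by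
    intro a j
    induction j with
    | zero => intro p; simp
    | succ j ih =>
      intro p
      calc ‖∑ i ∈ Finset.range (p+1), a i • ζ i‖
          ≤ (1 + ((4:ℝ)⁻¹)^(p+1)) * ‖∑ i ∈ Finset.range (p+2), a i • ζ i‖ := hchain a p
        _ ≤ (1 + ((4:ℝ)⁻¹)^(p+1)) * ((∏ i ∈ Finset.range j, (1 + ((4:ℝ)⁻¹)^(p+1+i+1)))
              * ‖∑ i ∈ Finset.range (p+1+1+j), a i • ζ i‖) := by
            exact mul_le_mul_of_nonneg_left (ih (p+1)) (by positivity)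
        _ = (∏ i ∈ Finset.range (j+1), (1 + ((4:ℝ)⁻¹)^(p+i+1)))
              * ‖∑ i ∈ Finset.range (p+1+(j+1)), a i • ζ i‖ := by
            rw [Finset.prod_range_succ' (fun i => 1 + ((4:ℝ)⁻¹)^(p+i+1)) j]
            rw [show p+1+1+j = p+1+(j+1) from by omega]
            have hpc : (∏ i ∈ Finset.range j, (1 + ((4:ℝ)⁻¹)^(p+(i+1)+1)))
                = ∏ i ∈ Finset.range j, (1 + ((4:ℝ)⁻¹)^(p+1+i+1)) := by
              apply Finset.prod_congr rfl
              intro i _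
              rw [show p+(i+1)+1 = p+1+i+1 from by omega]
            rw [hpc]
            ring
  have hbasic : ∀ (a : ℕ → ℝ) (p q : ℕ), p ≤ q →
      ‖∑ i ∈ Finset.range p, a i • ζ i‖ ≤ 2 * ‖∑ i ∈ Finset.range q, a i • ζ i‖ := by
    intro a p q hpq
    cases p with
    | zero =>
      have h0 : (0:ℝ) ≤ 2 * ‖∑ i ∈ Finset.range q, a i • ζ i‖ := by positivity
      simpa [norm_zero (E := StrongDual ℝ (StrongDual ℝ X))] using h0
    | succ p =>
      obtain ⟨j, rfl⟩ : ∃ j, q = p+1+j := ⟨q - (p+1), by omega⟩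
      have h2 : (∏ i ∈ Finset.range j, (1 + ((4:ℝ)⁻¹)^(p+i+1))) ≤ 2 := by
        calc ∏ i ∈ Finset.range j, (1 + ((4:ℝ)⁻¹)^(p+i+1))
            ≤ ∏ i ∈ Finset.range j, (1 + ((4:ℝ)⁻¹)^(i+1)) := by
              apply Finset.prod_le_prod
              · intro i _; positivity
              · intro i _
                have hle := pow_le_pow_of_le_one (by norm_num : (0:ℝ) ≤ 4⁻¹)
                  (by norm_num) (show i+1 ≤ p+i+1 by omega)
                linarith
          _ ≤ 2 - ((4:ℝ)⁻¹)^j := prod_bound j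
          _ ≤ 2 := by
              have : (0:ℝ) ≤ ((4:ℝ)⁻¹)^j := by positivity
              linarith
      calc ‖∑ i ∈ Finset.range (p+1), a i • ζ i‖
          ≤ (∏ i ∈ Finset.range j, (1 + ((4:ℝ)⁻¹)^(p+i+1)))
              * ‖∑ i ∈ Finset.range (p+1+j), a i • ζ i‖ := hprod a j p
        _ ≤ 2 * ‖∑ i ∈ Finset.range (p+1+j), a i • ζ i‖ :=
            mul_le_mul_of_nonneg_right h2 (norm_nonneg (E := StrongDual ℝ (StrongDual ℝ X)) _)
  have habs2 : ∀ p q : ℝ, |p - q| ≤ |p| + |q| := by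
    intro p q
    rw [sub_eq_add_neg]
    exact (abs_add_le _ _).trans (by rw [abs_neg])
  -- the core two-sided estimate along the subsequence k
  have hcore : ∀ (c : ℕ → ℝ) (n : ℕ),
      (d/4) * sbNorm c n ≤ ‖∑ j ∈ Finset.range (n+1), c j • b (k j)‖ ∧
      ‖∑ j ∈ Finset.range (n+1), c j • b (k j)‖ ≤ (2*C) * sbNorm c n := by
    intro c n
    set v : X := ∑ j ∈ Finset.range (n+1), c j • b (k j) with hv
    set a : ℕ → ℝ := fun i =>
      Nat.casesOn i (∑ j ∈ Finset.range (n+1), c j) c with ha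
    have hSid : ∀ m : ℕ, ∑ i ∈ Finset.range (m+1), a i • ζ i
        = ((∑ j ∈ Finset.range (n+1), c j) - ∑ j ∈ Finset.range m, c j) • L
          + J (∑ j ∈ Finset.range m, c j • b (k j)) := by
      intro m
      rw [Finset.sum_range_succ' (fun i => a i • ζ i) m]
      have h1 : ∀ i, a (i+1) • ζ (i+1) = c i • J (b (k i)) - c i • L := by
        intro i
        show c i • (J (b (k i)) - L) = _
        rw [smul_sub (A := StrongDual ℝ (StrongDual ℝ X))]
      rw [Finset.sum_congr rfl (fun i _ => h1 i), Finset.sum_sub_distrib (G := StrongDual ℝ (StrongDual ℝ X))]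
      have h2 : J (∑ j ∈ Finset.range m, c j • b (k j))
          = ∑ j ∈ Finset.range m, c j • J (b (k j)) := by
        rw [map_sum]
        exact Finset.sum_congr rfl fun j _ => by rw [map_smul]
      rw [h2, ← Finset.sum_smul]
      show _ - _ + (∑ j ∈ Finset.range (n+1), c j) • L = _
      rw [sub_smul (M := StrongDual ℝ (StrongDual ℝ X))]
      abel
    have hVv : ∑ i ∈ Finset.range (n+2), a i • ζ i = J v := by
      have h := hSid (n+1)
      rw [← hv, sub_self, zero_smul, zero_add] at h
      exact h
    have hJvv : ‖(J v : StrongDual ℝ (StrongDual ℝ X))‖ = ‖v‖ := hJnorm v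
    have hsm : ∀ m, m ≤ n+1 → |∑ j ∈ Finset.range m, c j| * d ≤ 4 * ‖v‖ := by
      intro m hm
      have h1 : |(∑ j ∈ Finset.range (n+1), c j) - ∑ j ∈ Finset.range m, c j| * d
          ≤ ‖∑ i ∈ Finset.range (m+1), a i • ζ i‖ := by
        rw [hSid m]
        exact hdist _ _
      have h2 : ‖∑ i ∈ Finset.range (m+1), a i • ζ i‖ ≤ 2 * ‖v‖ := by
        rw [← hJvv, ← hVv]
        exact hbasic a (m+1) (n+2) (by omega)
      have h3 : |∑ j ∈ Finset.range (n+1), c j| * d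
          ≤ ‖∑ i ∈ Finset.range 1, a i • ζ i‖ := by
        have h := hdist ((∑ j ∈ Finset.range (n+1), c j) - ∑ j ∈ Finset.range 0, c j)
          (∑ j ∈ Finset.range 0, c j • b (k j))
        rw [← hSid 0] at h
        simpa using h
      have h4 : ‖∑ i ∈ Finset.range 1, a i • ζ i‖ ≤ 2 * ‖v‖ := by
        rw [← hJvv, ← hVv]
        exact hbasic a 1 (n+2) (by omega)
      have h5 : |∑ j ∈ Finset.range m, c j|
          ≤ |∑ j ∈ Finset.range (n+1), c j|
            + |(∑ j ∈ Finset.range (n+1), c j) - ∑ j ∈ Finset.range m, c j| := by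
        have h := habs2 (∑ j ∈ Finset.range (n+1), c j)
          ((∑ j ∈ Finset.range (n+1), c j) - ∑ j ∈ Finset.range m, c j)
        rwa [sub_sub_cancel] at h
      have h6 := mul_le_mul_of_nonneg_right h5 hd.le
      rw [add_mul] at h6
      linarith
    have hlower : (d/4) * sbNorm c n ≤ ‖v‖ := by
      have hsup : sbNorm c n ≤ 4 * ‖v‖ / d := by
        unfold sbNorm
        apply Finset.sup'_le
        intro m hm
        rw [le_div_iff₀ hd]
        exact hsm m (by have := Finset.mem_range.1 hm; omega)
      calc (d/4) * sbNorm c n ≤ (d/4) * (4 * ‖v‖ / d) := by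
            exact mul_le_mul_of_nonneg_left hsup (by positivity)
        _ = ‖v‖ := by field_simp
    have hsb0 : (0:ℝ) ≤ sbNorm c n := by
      unfold sbNorm
      have h := Finset.le_sup' (fun m => |∑ j ∈ Finset.range m, c j|)
        (Finset.mem_range.2 (show 0 < n+2 by omega))
      simpa using h
    have hsbm : ∀ m, m ≤ n+1 → |∑ j ∈ Finset.range m, c j| ≤ sbNorm c n := by
      intro m hm
      unfold sbNorm
      exact Finset.le_sup' (fun m => |∑ j ∈ Finset.range m, c j|)
        (Finset.mem_range.2 (by omega))
    have hupper : ‖v‖ ≤ (2*C) * sbNorm c n := by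
      apply norm_le_dual_bound ℝ v (by positivity)
      intro f
      have hbk : ∀ j, b (k j) = ∑ i ∈ Finset.range (k j + 1), x i :=
        fun j => (diffSeq_sum b (k j)).symm
      have hbv : v = ∑ i ∈ Finset.range (k n + 1),
          (∑ j ∈ (Finset.range (n+1)).filter (fun j => i ≤ k j), c j) • x i := by
        rw [hv, Finset.sum_congr rfl (fun j _ => by rw [hbk j])]
        exact swap_sum x k hkmono.monotone c n
      have hti : ∀ i, |∑ j ∈ (Finset.range (n+1)).filter (fun j => i ≤ k j), c j|
          ≤ 2 * sbNorm c n := by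
        intro i
        have hex : ∃ j, i ≤ k j := ⟨i, hkmono.le_apply⟩
        have hfilter : (Finset.range (n+1)).filter (fun j => i ≤ k j)
            = Finset.Ico (Nat.find hex) (n+1) := by
          ext j
          simp only [Finset.mem_filter, Finset.mem_range, Finset.mem_Ico]
          constructor
          · rintro ⟨h1, h2⟩
            exact ⟨Nat.find_min' hex h2, h1⟩
          · rintro ⟨h1, h2⟩
            exact ⟨h2, le_trans (Nat.find_spec hex) (hkmono.monotone h1)⟩
        rw [hfilter]
        by_cases hcm : Nat.find hex ≤ n+1
        · rw [Finset.sum_Ico_eq_sub _ hcm]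
          have e1 := hsbm (n+1) le_rfl
          have e2 := hsbm (Nat.find hex) hcm
          have e3 := habs2 (∑ j ∈ Finset.range (n+1), c j) (∑ j ∈ Finset.range (Nat.find hex), c j)
          linarith
        · rw [Finset.Ico_eq_empty (by omega)]
          simp only [Finset.sum_empty, abs_zero]
          positivity
      rw [hbv, map_sum, Real.norm_eq_abs]
      calc |∑ i ∈ Finset.range (k n + 1),
              f ((∑ j ∈ (Finset.range (n+1)).filter (fun j => i ≤ k j), c j) • x i)|
          ≤ ∑ i ∈ Finset.range (k n + 1),
              |f ((∑ j ∈ (Finset.range (n+1)).filter (fun j => i ≤ k j), c j) • x i)| :=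
            Finset.abs_sum_le_sum_abs _ _
        _ = ∑ i ∈ Finset.range (k n + 1),
              |∑ j ∈ (Finset.range (n+1)).filter (fun j => i ≤ k j), c j| * |f (x i)| := by
            refine Finset.sum_congr rfl fun i _ => ?_
            rw [map_smul, smul_eq_mul, abs_mul]
        _ ≤ ∑ i ∈ Finset.range (k n + 1), (2 * sbNorm c n) * |f (x i)| := by
            refine Finset.sum_le_sum fun i _ => ?_
            exact mul_le_mul_of_nonneg_right (hti i) (abs_nonneg _)
        _ = (2 * sbNorm c n) * ∑ i ∈ Finset.range (k n + 1), |f (x i)| := by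
            rw [← Finset.mul_sum]
        _ ≤ (2 * sbNorm c n) * (C * ‖f‖) := by
            exact mul_le_mul_of_nonneg_left (hC f (k n + 1)) (by positivity)
        _ = 2*C * sbNorm c n * ‖f‖ := by ring
    exact ⟨hlower, hupper⟩
  constructor
  · -- first conjunct: subsequence equivalent to the summing basis
    refine ⟨k, hkmono, d/4, 2*C, by positivity, fun c n => ?_⟩
    have h := hcore c n
    simpa [Function.comp] using h
  · -- second conjunct: copy of c₀ via the difference sequence
    refine ⟨fun j => b (k (j+1)) - b (k j), d/4, 2*C, by positivity, fun c n => ?_⟩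
    set dd : ℕ → ℝ := fun j =>
      (if 1 ≤ j then c (j-1) else 0) - (if j ≤ n then c j else 0) with hdd
    have hid : ∑ j ∈ Finset.range (n+2), dd j • b (k j)
        = ∑ j ∈ Finset.range (n+1), c j • (b (k (j+1)) - b (k j)) := by
      have h1 : ∀ j, dd j • b (k j)
          = (if 1 ≤ j then c (j-1) else 0) • b (k j)
            - (if j ≤ n then c j else 0) • b (k j) := fun j => sub_smul _ _ _
      rw [Finset.sum_congr rfl (fun j _ => h1 j), Finset.sum_sub_distrib]
      have h2 : ∑ j ∈ Finset.range (n+2), (if 1 ≤ j then c (j-1) else 0) • b (k j)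
          = ∑ j ∈ Finset.range (n+1), c j • b (k (j+1)) := by
        rw [Finset.sum_range_succ' (fun j => (if 1 ≤ j then c (j-1) else 0) • b (k j)) (n+1)]
        simp [Nat.succ_sub_one]
      have h3 : ∑ j ∈ Finset.range (n+2), (if j ≤ n then c j else 0) • b (k j)
          = ∑ j ∈ Finset.range (n+1), c j • b (k j) := by
        rw [Finset.sum_range_succ, if_neg (by omega), zero_smul, add_zero]
        exact Finset.sum_congr rfl fun j hj => by
          rw [if_pos (Nat.lt_succ_iff.1 (Finset.mem_range.1 hj))]
      rw [h2, h3, ← Finset.sum_sub_distrib]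
      exact Finset.sum_congr rfl fun j _ => (smul_sub _ _ _).symm
    have hdsum : ∀ m, ∑ j ∈ Finset.range m, dd j
        = (∑ j ∈ Finset.range m, (if 1 ≤ j then c (j-1) else 0))
          - ∑ j ∈ Finset.range m, (if j ≤ n then c j else 0) := by
      intro m
      rw [← Finset.sum_sub_distrib]
    have hfirst : ∀ m, ∑ j ∈ Finset.range (m+1), (if 1 ≤ j then c (j-1) else 0)
        = ∑ j ∈ Finset.range m, c j := by
      intro m
      rw [Finset.sum_range_succ' (fun j => if 1 ≤ j then c (j-1) else 0) m]
      simp [Nat.succ_sub_one]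
    have hsecond : ∀ m, m ≤ n+1 → ∑ j ∈ Finset.range m, (if j ≤ n then c j else 0)
        = ∑ j ∈ Finset.range m, c j := by
      intro m hm
      exact Finset.sum_congr rfl fun j hj =>
        if_pos (by have := Finset.mem_range.1 hj; omega)
    have hps1 : ∀ m, m ≤ n → ∑ j ∈ Finset.range (m+1), dd j = -(c m) := by
      intro m hm
      rw [hdsum, hfirst, hsecond (m+1) (by omega), Finset.sum_range_succ]
      ring
    have hps2 : ∑ j ∈ Finset.range (n+2), dd j = 0 := by
      rw [hdsum, hfirst]
      have h3 : ∑ j ∈ Finset.range (n+2), (if j ≤ n then c j else 0)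
          = ∑ j ∈ Finset.range (n+1), c j := by
        rw [Finset.sum_range_succ, if_neg (by omega), add_zero]
        exact hsecond (n+1) le_rfl
      rw [h3]
      ring
    have hsup : sbNorm dd (n+1)
        = (Finset.range (n+1)).sup' ⟨0, Finset.mem_range.mpr (Nat.succ_pos n)⟩
            (fun j => |c j|) := by
      have hc0 : (0:ℝ) ≤ (Finset.range (n+1)).sup'
          ⟨0, Finset.mem_range.mpr (Nat.succ_pos n)⟩ (fun j => |c j|) :=
        le_trans (abs_nonneg (c 0))
          (Finset.le_sup' (fun j => |c j|) (Finset.mem_range.2 (Nat.succ_pos n)))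
      apply le_antisymm
      · unfold sbNorm
        apply Finset.sup'_le
        intro m hm
        have hm' : m < n+3 := Finset.mem_range.1 hm
        rcases Nat.eq_zero_or_pos m with rfl | hm0
        · simpa using hc0
        · rcases le_or_gt m (n+1) with hmn | hmn
          · obtain ⟨m', rfl⟩ : ∃ m', m = m'+1 := ⟨m-1, by omega⟩
            rw [hps1 m' (by omega), abs_neg]
            exact Finset.le_sup' (fun j => |c j|) (Finset.mem_range.2 (by omega))
          · have hm2 : m = n+2 := by omega
            rw [hm2, hps2]
            simpa using hc0
      · apply Finset.sup'_le
        intro j hj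
        have hj' : j ≤ n := Nat.lt_succ_iff.1 (Finset.mem_range.1 hj)
        have he : |c j| = |∑ i ∈ Finset.range (j+1), dd i| := by
          rw [hps1 j hj', abs_neg]
        rw [he]
        unfold sbNorm
        exact Finset.le_sup' (fun m => |∑ i ∈ Finset.range m, dd i|)
          (Finset.mem_range.2 (by omega))
    obtain ⟨hlo, hhi⟩ := hcore dd (n+1)
    rw [hid] at hlo hhi
    rw [hsup] at hlo hhi
    exact ⟨hlo, hhi⟩
end

section
/- Let K be a separable metric space and f, g : K → ℂ functions. For every countable ordinal α: osc_α f is upper semi-continuous with values in [0,∞]; osc_α(tf) = |t| osc_α f for t ∈ ℂ; osc_α(f+g) ≤ osc_α f + osc_α g; and α ≤ β implies osc_α f ≤ osc_β f. -/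
open Filter Topology
open scoped ENNReal

/-- The upper semi-continuous envelope `Uh(x) = limsup_{y → x} h(y)`
(non-exclusive limsup, taken along the full neighborhood filter). -/
noncomputable def uEnv {K : Type*} [TopologicalSpace K] (h : K → ℝ≥0∞) : K → ℝ≥0∞ :=
  fun x => Filter.limsup h (nhds x)

/-- The transfinite oscillations of a complex-valued function:
`osc_0 f ≡ 0`; `osc~_{α+1} f (x) = limsup_{y→x} (|f y - f x| + osc_α f y)`;
`osc~_β f = sup_{α<β} osc_α f` for limit `β`; `osc_β f = U (osc~_β f)`. -/
noncomputable def oscC {K : Type*} [TopologicalSpace K] (f : K → ℂ) (α : Ordinal) :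
    K → ℝ≥0∞ :=
  Ordinal.limitRecOn (motive := fun _ => K → ℝ≥0∞) α
    (fun _ => 0)
    (fun _ prev => uEnv (fun x =>
      Filter.limsup (fun y => (‖f y - f x‖₊ : ℝ≥0∞) + prev y) (nhds x)))
    (fun o _ ih => uEnv (fun x => ⨆ (β : Ordinal) (hβ : β < o), ih β hβ x))

/-- Upper semi-continuous envelope for extended-real-valued functions. -/
noncomputable def uEnvE {K : Type*} [TopologicalSpace K] (h : K → EReal) : K → EReal :=
  fun x => Filter.limsup h (nhds x)

/-- The transfinite oscillations of a real-valued function (values in `[-∞,∞]`,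
though they are always in `[0,∞]`). -/
noncomputable def oscR {K : Type*} [TopologicalSpace K] (f : K → ℝ) (α : Ordinal) :
    K → EReal :=
  Ordinal.limitRecOn (motive := fun _ => K → EReal) α
    (fun _ => 0)
    (fun _ prev => uEnvE (fun x =>
      Filter.limsup (fun y => ((|f y - f x| : ℝ) : EReal) + prev y) (nhds x)))
    (fun o _ ih => uEnvE (fun x => ⨆ (β : Ordinal) (hβ : β < o), ih β hβ x))

/-- The transfinite positive oscillations `v_α f` of Kechris–Louveau: defined as the
transfinite oscillations but with `f y - f x` in place of `|f y - f x|`. -/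
noncomputable def posOscR {K : Type*} [TopologicalSpace K] (f : K → ℝ) (α : Ordinal) :
    K → EReal :=
  Ordinal.limitRecOn (motive := fun _ => K → EReal) α
    (fun _ => 0)
    (fun _ prev => uEnvE (fun x =>
      Filter.limsup (fun y => ((f y - f x : ℝ) : EReal) + prev y) (nhds x)))
    (fun o _ ih => uEnvE (fun x => ⨆ (β : Ordinal) (hβ : β < o), ih β hβ x))

section Aux
variable {K : Type*} [TopologicalSpace K]

lemma ennreal_limsup_add_le {ι : Type*} (F : Filter ι) (u v : ι → ℝ≥0∞) :
    Filter.limsup (fun i => u i + v i) F ≤ Filter.limsup u F + Filter.limsup v F := by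
  rcases F.eq_or_neBot with rfl | hF
  · simp
  by_cases hu : Filter.limsup u F = ⊤
  · simp [hu]
  by_cases hv : Filter.limsup v F = ⊤
  · simp [hv]
  refine ENNReal.le_of_forall_pos_le_add fun ε hε _ => ?_
  have hε2 : ((ε : ℝ≥0∞) / 2) ≠ 0 := by
    simp [ENNReal.div_eq_zero_iff, hε.ne']
  have h1 : ∀ᶠ i in F, u i < Filter.limsup u F + (ε : ℝ≥0∞) / 2 :=
    eventually_lt_of_limsup_lt (ENNReal.lt_add_right hu hε2)
  have h2 : ∀ᶠ i in F, v i < Filter.limsup v F + (ε : ℝ≥0∞) / 2 :=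
    eventually_lt_of_limsup_lt (ENNReal.lt_add_right hv hε2)
  refine limsup_le_of_le (by isBoundedDefault) ?_
  filter_upwards [h1, h2] with i hi1 hi2
  calc u i + v i ≤ (Filter.limsup u F + (ε : ℝ≥0∞) / 2) + (Filter.limsup v F + (ε : ℝ≥0∞) / 2) :=
        add_le_add hi1.le hi2.le
    _ = Filter.limsup u F + Filter.limsup v F + (ε : ℝ≥0∞) := by
        rw [add_add_add_comm, ENNReal.add_halves]

lemma le_uEnv (h : K → ℝ≥0∞) (x : K) : h x ≤ uEnv h x :=
  le_limsup_of_frequently_le'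
    (Filter.frequently_iff.mpr fun hs => ⟨x, mem_of_mem_nhds hs, le_rfl⟩)

lemma uEnv_usc (h : K → ℝ≥0∞) : UpperSemicontinuous (uEnv h) := by
  intro x c hc
  rw [uEnv, Filter.limsup_eq_iInf_iSup] at hc
  obtain ⟨s, hsc⟩ := iInf_lt_iff.mp hc
  obtain ⟨hs, hsc⟩ := iInf_lt_iff.mp hsc
  filter_upwards [interior_mem_nhds.mpr hs] with z hz
  have h1 : uEnv h z ≤ ⨆ a ∈ interior s, h a := by
    rw [uEnv, Filter.limsup_eq_iInf_iSup]
    exact iInf₂_le (interior s) (isOpen_interior.mem_nhds hz)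
  refine lt_of_le_of_lt (h1.trans ?_) hsc
  exact iSup_le fun a => iSup_le fun ha =>
    le_iSup₂ (f := fun a (_ : a ∈ s) => h a) a (interior_subset ha)

lemma oscC_zero (f : K → ℂ) : oscC f 0 = fun _ => 0 :=
  Ordinal.limitRecOn_zero _ _ _

lemma oscC_succ (f : K → ℂ) (α : Ordinal) :
    oscC f (Order.succ α) = uEnv (fun x =>
      Filter.limsup (fun y => (‖f y - f x‖₊ : ℝ≥0∞) + oscC f α y) (nhds x)) :=
  Ordinal.limitRecOn_succ _ _ _ _

lemma oscC_limit (f : K → ℂ) (o : Ordinal) (ho : Order.IsSuccLimit o) :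
    oscC f o = uEnv (fun x => ⨆ (β : Ordinal) (_ : β < o), oscC f β x) :=
  Ordinal.limitRecOn_limit _ _ _ _ ho

lemma oscC_le_succ (f : K → ℂ) (α : Ordinal) (x : K) :
    oscC f α x ≤ oscC f (Order.succ α) x := by
  rw [oscC_succ]
  refine le_trans (le_trans ?_
    (Filter.limsup_le_limsup (Filter.Eventually.of_forall fun y =>
      (le_add_self : oscC f α y ≤ (‖f y - f x‖₊ : ℝ≥0∞) + oscC f α y)))) (le_uEnv _ x)
  exact le_uEnv (oscC f α) x

lemma oscC_mono (f : K → ℂ) :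
    ∀ β α : Ordinal, α ≤ β → ∀ x : K, oscC f α x ≤ oscC f β x := by
  intro β
  induction β using Ordinal.limitRecOn with
  | zero =>
    intro α hα x
    rw [nonpos_iff_eq_zero.mp hα]
  | add_one γ ih =>
    rw [Ordinal.add_one_eq_succ]
    intro α hα x
    rcases eq_or_lt_of_le hα with rfl | hlt
    · exact le_rfl
    · exact (ih α (Order.lt_succ_iff.mp hlt) x).trans (oscC_le_succ f γ x)
  | limit o ho ih =>
    intro α hα x
    rcases eq_or_lt_of_le hα with rfl | hlt
    · exact le_rfl
    · rw [oscC_limit f o ho]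
      refine le_trans ?_ (le_uEnv _ x)
      exact le_iSup₂ (f := fun β (_ : β < o) => oscC f β x) α hlt

lemma oscC_smul (f : K → ℂ) (t : ℂ) :
    ∀ (α : Ordinal) (x : K),
      oscC (fun y => t * f y) α x = (‖t‖₊ : ℝ≥0∞) * oscC f α x := by
  intro α
  induction α using Ordinal.limitRecOn with
  | zero => intro x; rw [oscC_zero, oscC_zero]; simp
  | add_one γ ih =>
    rw [Ordinal.add_one_eq_succ]
    intro x
    rw [oscC_succ, oscC_succ, uEnv, uEnv,
      ← ENNReal.limsup_const_mul_of_ne_top ENNReal.coe_ne_top]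
    congr 1
    funext z
    rw [← ENNReal.limsup_const_mul_of_ne_top ENNReal.coe_ne_top]
    congr 1
    funext y
    rw [ih y, mul_add, ← mul_sub, nnnorm_mul, ENNReal.coe_mul]
  | limit o ho ih =>
    intro x
    rw [oscC_limit _ o ho, oscC_limit f o ho, uEnv, uEnv,
      ← ENNReal.limsup_const_mul_of_ne_top ENNReal.coe_ne_top]
    congr 1
    funext z
    rw [ENNReal.mul_iSup]
    congr 1
    funext β
    rw [ENNReal.mul_iSup]
    congr 1
    funext hβ
    exact ih β hβ z

lemma oscC_add (f g : K → ℂ) :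
    ∀ (α : Ordinal) (x : K),
      oscC (fun y => f y + g y) α x ≤ oscC f α x + oscC g α x := by
  intro α
  induction α using Ordinal.limitRecOn with
  | zero => intro x; rw [oscC_zero]; simp
  | add_one γ ih =>
    rw [Ordinal.add_one_eq_succ]
    intro x
    rw [oscC_succ, oscC_succ, oscC_succ, uEnv, uEnv, uEnv]
    refine le_trans (Filter.limsup_le_limsup (Filter.Eventually.of_forall fun z => ?_))
      (ennreal_limsup_add_le _ _ _)
    refine le_trans (Filter.limsup_le_limsup (Filter.Eventually.of_forall fun y => ?_))
      (ennreal_limsup_add_le _ _ _)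
    calc (‖(f y + g y) - (f z + g z)‖₊ : ℝ≥0∞) + oscC (fun y => f y + g y) γ y
        ≤ ((‖f y - f z‖₊ : ℝ≥0∞) + (‖g y - g z‖₊ : ℝ≥0∞)) +
            (oscC f γ y + oscC g γ y) := by
          refine add_le_add ?_ (ih y)
          rw [← ENNReal.coe_add, ENNReal.coe_le_coe]
          calc ‖(f y + g y) - (f z + g z)‖₊ = ‖(f y - f z) + (g y - g z)‖₊ := by ring_nf
            _ ≤ ‖f y - f z‖₊ + ‖g y - g z‖₊ := nnnorm_add_le _ _
      _ = ((‖f y - f z‖₊ : ℝ≥0∞) + oscC f γ y) + ((‖g y - g z‖₊ : ℝ≥0∞) + oscC g γ y) := by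
          rw [add_add_add_comm]
  | limit o ho ih =>
    intro x
    rw [oscC_limit _ o ho, oscC_limit f o ho, oscC_limit g o ho, uEnv, uEnv, uEnv]
    refine le_trans (Filter.limsup_le_limsup (Filter.Eventually.of_forall fun z => ?_))
      (ennreal_limsup_add_le _ _ _)
    exact iSup₂_le fun β hβ => (ih β hβ z).trans
      (add_le_add (le_iSup₂ (f := fun β (_ : β < o) => oscC f β z) β hβ)
        (le_iSup₂ (f := fun β (_ : β < o) => oscC g β z) β hβ))

lemma oscC_usc (f : K → ℂ) (α : Ordinal) : UpperSemicontinuous (oscC f α) := by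
  rcases Ordinal.zero_or_succ_or_isSuccLimit α with rfl | ⟨γ, rfl⟩ | ho
  · rw [oscC_zero]; exact upperSemicontinuous_const
  · rw [oscC_succ]; exact uEnv_usc _
  · rw [oscC_limit f α ho]; exact uEnv_usc _

end Aux

/-- basic permanence properties of the transfinite oscillations of
complex-valued functions on a separable metric space. -/
theorem stmt14 {K : Type*} [MetricSpace K] [TopologicalSpace.SeparableSpace K]
    (f g : K → ℂ) (α : Ordinal) (hα : α.card ≤ Cardinal.aleph0) :
    UpperSemicontinuous (oscC f α) ∧
    (∀ (t : ℂ) (x : K), oscC (fun y => t * f y) α x = (‖t‖₊ : ℝ≥0∞) * oscC f α x) ∧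
    (∀ x : K, oscC (fun y => f y + g y) α x ≤ oscC f α x + oscC g α x) ∧
    (∀ β : Ordinal, β.card ≤ Cardinal.aleph0 → α ≤ β → ∀ x : K, oscC f α x ≤ oscC f β x) := by
  refine ⟨oscC_usc f α, fun t x => oscC_smul f t α x, fun x => oscC_add f g α x,
    fun β _ hab x => oscC_mono f β α hab x⟩
end

section
/- Let K be a separable metric space, f : K → ℝ, and α a countable ordinal such that osc_α f = osc_{α+1} f. Then osc_α f = osc_β f for all β > α. Moreover, osc_α f = osc_{α+1} f holds if and only if both osc_α f + f and osc_α f - f are upper semi-continuous functions. -/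
open Filter Topology
open scoped ENNReal

section Stmt15Aux

open Filter Topology

/-! ### EReal arithmetic helpers -/

private lemma ereal_add_sub (a : EReal) (r s : ℝ) :
    a + ((r - s : ℝ) : EReal) = (a + r) - s := by
  induction a with
  | bot => simp [EReal.bot_add, EReal.bot_sub]
  | coe a => norm_cast; ring
  | top => rw [EReal.top_add_coe, EReal.top_add_coe, EReal.top_sub_coe]

private lemma ereal_add_sub' (a : EReal) (r s : ℝ) :
    a + ((r - s : ℝ) : EReal) = (a - s) + r := by
  induction a with
  | bot => simp [EReal.bot_add, EReal.bot_sub]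
  | coe a => norm_cast; ring
  | top => rw [EReal.top_add_coe, EReal.top_sub_coe, EReal.top_add_coe]

/-- Translation by a real constant as an order isomorphism of `EReal`. -/
private noncomputable def erealAddIso (r : ℝ) : EReal ≃o EReal where
  toFun x := x + r
  invFun x := x - r
  left_inv x := EReal.add_sub_cancel_right
  right_inv x := EReal.sub_add_cancel
  map_rel_iff' := by
    intro a b
    exact (EReal.addLECancellable_coe r).add_le_add_iff_right

private lemma limsup_add_real {ι : Type*} (F : Filter ι) (u : ι → EReal) (r : ℝ) :
    limsup (fun y => u y + (r : EReal)) F = limsup u F + r :=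
  ((erealAddIso r).limsup_apply).symm

private lemma limsup_sub_real {ι : Type*} (F : Filter ι) (u : ι → EReal) (r : ℝ) :
    limsup (fun y => u y - (r : EReal)) F = limsup u F - r := by
  have h1 : ∀ a : EReal, a - (r : EReal) = a + ((-r : ℝ) : EReal) := by
    intro a; rw [sub_eq_add_neg, EReal.coe_neg]
  simp only [h1]
  exact limsup_add_real F u (-r)

variable {K : Type*} [TopologicalSpace K]

/-! ### The upper semicontinuous envelope -/

private lemma le_uEnvE (h : K → EReal) : h ≤ uEnvE h := by
  intro x
  refine le_limsup_of_frequently_le ?_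
  exact fun hev => (mem_of_mem_nhds hev : ¬ h x ≤ h x) le_rfl

private lemma uEnvE_mono {g h : K → EReal} (hgh : g ≤ h) : uEnvE g ≤ uEnvE h := fun _ =>
  limsup_le_limsup (Eventually.of_forall fun y => hgh y)

private lemma uEnvE_usc (h : K → EReal) : UpperSemicontinuous (uEnvE h) := by
  intro x y hy
  obtain ⟨c, hc1, hc2⟩ := exists_between hy
  obtain ⟨t, ht, hto, hxt⟩ := eventually_nhds_iff.1 (eventually_lt_of_limsup_lt hc1)
  filter_upwards [hto.mem_nhds hxt] with z hz
  have : uEnvE h z ≤ c := by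
    refine limsup_le_of_le (by isBoundedDefault) ?_
    filter_upwards [hto.mem_nhds hz] with w hw
    exact (ht w hw).le
  exact lt_of_le_of_lt this hc2

private lemma uEnvE_of_usc {h : K → EReal} (hh : UpperSemicontinuous h) : uEnvE h = h :=
  funext fun x => le_antisymm (hh.limsup_le x) (le_uEnvE h x)

/-! ### Unfolding lemmas for `oscR` -/

private lemma oscR_zero (f : K → ℝ) : oscR f 0 = fun _ => 0 := by
  unfold oscR; rw [Ordinal.limitRecOn_zero]

private lemma oscR_succ (f : K → ℝ) (α : Ordinal) :
    oscR f (α + 1) = uEnvE (fun x =>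
      limsup (fun y => ((|f y - f x| : ℝ) : EReal) + oscR f α y) (𝓝 x)) := by
  unfold oscR; rw [Ordinal.limitRecOn_add_one]

private lemma oscR_limit (f : K → ℝ) {β : Ordinal} (hβ : Order.IsSuccLimit β) :
    oscR f β = uEnvE (fun x => ⨆ (γ : Ordinal) (_ : γ < β), oscR f γ x) := by
  unfold oscR; rw [Ordinal.limitRecOn_limit _ _ _ _ hβ]

private lemma oscR_usc (f : K → ℝ) (α : Ordinal) : UpperSemicontinuous (oscR f α) := by
  rcases Ordinal.zero_or_succ_or_isSuccLimit α with h | ⟨γ, h⟩ | h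
  · subst h; rw [oscR_zero]; exact fun x y hy => Eventually.of_forall fun z => hy
  · rw [← Ordinal.add_one_eq_succ] at h; subst h; rw [oscR_succ]; exact uEnvE_usc _
  · rw [oscR_limit f h]; exact uEnvE_usc _

private lemma oscR_le_succ (f : K → ℝ) (α : Ordinal) : oscR f α ≤ oscR f (α + 1) := by
  rw [oscR_succ]
  intro x
  refine le_trans ?_ (le_uEnvE _ x)
  refine le_trans (le_uEnvE (oscR f α) x) ?_
  refine limsup_le_limsup (Eventually.of_forall fun y => ?_)
  have h0 : (0 : EReal) + oscR f α y ≤ ((|f y - f x| : ℝ) : EReal) + oscR f α y := by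
    refine add_le_add ?_ le_rfl
    exact_mod_cast abs_nonneg (f y - f x)
  simpa using h0

private lemma oscR_mono (f : K → ℝ) (β : Ordinal) : ∀ α ≤ β, oscR f α ≤ oscR f β := by
  induction β using Ordinal.limitRecOn with
  | zero => intro α h; rw [nonpos_iff_eq_zero.1 h]
  | add_one γ ih =>
    intro α h
    rcases eq_or_lt_of_le h with rfl | h'
    · exact le_rfl
    · exact le_trans (ih α (Order.lt_add_one_iff.1 h')) (oscR_le_succ f γ)
  | limit γ hγ ih =>
    intro α h
    rcases eq_or_lt_of_le h with rfl | h'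
    · exact le_rfl
    · rw [oscR_limit f hγ]
      intro x
      refine le_trans ?_ (le_uEnvE _ x)
      exact le_iSup₂ (f := fun (δ : Ordinal) (_ : δ < γ) => oscR f δ x) α h'

private lemma oscR_stab (f : K → ℝ) {α : Ordinal} (hstab : oscR f α = oscR f (α + 1)) :
    ∀ β, α ≤ β → oscR f β = oscR f α := by
  intro β
  induction β using Ordinal.limitRecOn with
  | zero => intro h; rw [nonpos_iff_eq_zero.1 h]
  | add_one γ ih =>
    intro h
    rcases eq_or_lt_of_le h with heq | h'
    · rw [← heq]
    · have hγ' : oscR f γ = oscR f α := ih (Order.lt_add_one_iff.1 h')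
      rw [oscR_succ, hγ']
      rw [← oscR_succ, ← hstab]
  | limit γ hγ ih =>
    intro h
    rcases eq_or_lt_of_le h with heq | h'
    · rw [← heq]
    · rw [oscR_limit f hγ]
      have hsup : (fun x => ⨆ (δ : Ordinal) (_ : δ < γ), oscR f δ x) = oscR f α := by
        funext x
        refine le_antisymm (iSup₂_le fun δ hδ => ?_) ?_
        · rcases le_or_gt δ α with hδα | hδα
          · exact oscR_mono f α δ hδα x
          · rw [ih δ hδ hδα.le]
        · exact le_iSup₂ (f := fun (δ : Ordinal) (_ : δ < γ) => oscR f δ x) α h'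
      rw [hsup, uEnvE_of_usc (oscR_usc f α)]

/-! ### The key pointwise equivalence for the characterization -/

private lemma key_equiv (A : K → EReal) (f : K → ℝ) (x : K) :
    limsup (fun y => ((|f y - f x| : ℝ) : EReal) + A y) (𝓝 x) ≤ A x ↔
      (limsup (fun y => A y + ((f y : ℝ) : EReal)) (𝓝 x) ≤ A x + ((f x : ℝ) : EReal) ∧
       limsup (fun y => A y - ((f y : ℝ) : EReal)) (𝓝 x) ≤ A x - ((f x : ℝ) : EReal)) := by
  have hpt : ∀ y, ((|f y - f x| : ℝ) : EReal) + A y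
      = max ((A y + (f y : EReal)) - (f x : EReal)) ((A y - (f y : EReal)) + (f x : EReal)) := by
    intro y
    calc ((|f y - f x| : ℝ) : EReal) + A y
        = ((max (f y - f x) (f x - f y) : ℝ) : EReal) + A y := by
          rw [abs_eq_max_neg, neg_sub]
      _ = max ((f y - f x : ℝ) : EReal) ((f x - f y : ℝ) : EReal) + A y := by
          rw [EReal.coe_strictMono.monotone.map_max]
      _ = max (((f y - f x : ℝ) : EReal) + A y) (((f x - f y : ℝ) : EReal) + A y) :=
          (max_add_add_right _ _ _).symm
      _ = max (A y + ((f y - f x : ℝ) : EReal)) (A y + ((f x - f y : ℝ) : EReal)) := by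
          rw [add_comm (((f y - f x : ℝ)) : EReal) (A y),
            add_comm (((f x - f y : ℝ)) : EReal) (A y)]
      _ = max ((A y + (f y : EReal)) - (f x : EReal)) ((A y - (f y : EReal)) + (f x : EReal)) := by
          rw [ereal_add_sub, ereal_add_sub']
  simp only [hpt]
  rw [limsup_max, limsup_sub_real, limsup_add_real, max_le_iff,
    EReal.sub_le_iff_le_add (Or.inl (EReal.coe_ne_bot (f x))) (Or.inl (EReal.coe_ne_top (f x))),
    ← EReal.le_sub_iff_add_le (Or.inl (EReal.coe_ne_bot (f x))) (Or.inl (EReal.coe_ne_top (f x)))]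

end Stmt15Aux

/-- if the transfinite oscillations of a real-valued function
stabilize at α, they are constant from α on; and stabilization at α is
equivalent to upper semi-continuity of osc_α f ± f. -/
theorem stmt15 {K : Type*} [MetricSpace K] [TopologicalSpace.SeparableSpace K]
    (f : K → ℝ) (α : Ordinal) (hα : α.card ≤ Cardinal.aleph0) :
    (oscR f α = oscR f (α + 1) → ∀ β : Ordinal, α < β → oscR f α = oscR f β) ∧
    (oscR f α = oscR f (α + 1) ↔
      (UpperSemicontinuous (fun x => oscR f α x + ((f x : ℝ) : EReal)) ∧
       UpperSemicontinuous (fun x => oscR f α x - ((f x : ℝ) : EReal)))) := by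
  constructor
  · intro hstab β hβ
    exact (oscR_stab f hstab β hβ.le).symm
  · constructor
    · intro hstab
      have hg : ∀ x : K,
          Filter.limsup (fun y => ((|f y - f x| : ℝ) : EReal) + oscR f α y) (𝓝 x)
            ≤ oscR f α x := by
        intro x
        have h1 := le_uEnvE (fun x =>
          Filter.limsup (fun y => ((|f y - f x| : ℝ) : EReal) + oscR f α y) (𝓝 x)) x
        rw [← oscR_succ, ← hstab] at h1
        exact h1
      have hx := fun x => (key_equiv (oscR f α) f x).1 (hg x)
      exact ⟨upperSemicontinuous_iff_limsup_le.2 fun x => (hx x).1,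
        upperSemicontinuous_iff_limsup_le.2 fun x => (hx x).2⟩
    · rintro ⟨h1, h2⟩
      have h1' := upperSemicontinuous_iff_limsup_le.1 h1
      have h2' := upperSemicontinuous_iff_limsup_le.1 h2
      have hg : (fun x => Filter.limsup
            (fun y => ((|f y - f x| : ℝ) : EReal) + oscR f α y) (𝓝 x)) ≤ oscR f α :=
        fun x => (key_equiv (oscR f α) f x).2 ⟨h1' x, h2' x⟩
      refine le_antisymm (oscR_le_succ f α) ?_
      rw [oscR_succ]
      calc uEnvE (fun x => Filter.limsup
              (fun y => ((|f y - f x| : ℝ) : EReal) + oscR f α y) (𝓝 x))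
          ≤ uEnvE (oscR f α) := uEnvE_mono hg
        _ = oscR f α := uEnvE_of_usc (oscR_usc f α)
end

section
/- Let (φ_α)_{α < ω₁} be a family of upper semi-continuous extended-real-valued functions on a separable metric space K with φ_α ≤ φ_β whenever α ≤ β. Then there exists a countable ordinal α such that φ_α = φ_β for all β > α. -/
open Filter Topology
open scoped ENNReal

/-- an increasing ω₁-family of upper semi-continuous extended-real
functions on a separable metric space stabilizes at some countable ordinal. -/
theorem stmt17 {K : Type*} [MetricSpace K] [TopologicalSpace.SeparableSpace K]
    (φ : Ordinal → K → EReal)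
    (husc : ∀ α : Ordinal, α < (Cardinal.aleph 1).ord → UpperSemicontinuous (φ α))
    (hmono : ∀ α β : Ordinal, α ≤ β → β < (Cardinal.aleph 1).ord → ∀ x, φ α x ≤ φ β x) :
    ∃ α : Ordinal, α < (Cardinal.aleph 1).ord ∧
      ∀ β : Ordinal, α < β → β < (Cardinal.aleph 1).ord → φ α = φ β := by
  classical
  haveI : SecondCountableTopology K := UniformSpace.secondCountable_of_separable K
  obtain ⟨B, hBc, -, hB⟩ := TopologicalSpace.exists_countable_basis K
  haveI : Countable B := hBc.to_subtype
  set Λ := (Cardinal.aleph 1).ord with hΛ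
  set S : Ordinal → Set (B × ℚ) :=
    fun α => {e | ∀ x ∈ (e.1 : Set K), φ α x < ((e.2 : ℝ) : EReal)} with hS
  have hanti : ∀ a b : Ordinal, a ≤ b → b < Λ → S b ⊆ S a := by
    intro a b hab hb e he x hx
    exact lt_of_le_of_lt (hmono a b hab hb x) (he x hx)
  have key : ∀ a b : Ordinal, a ≤ b → b < Λ → S a ⊆ S b → φ a = φ b := by
    intro a b hab hb hSab
    funext x
    refine le_antisymm (hmono a b hab hb x) ?_
    by_contra hlt
    push_neg at hlt
    obtain ⟨q, hq1, hq2⟩ := EReal.exists_rat_btwn_of_lt hlt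
    have hopen : IsOpen {y | φ a y < ((q : ℝ) : EReal)} :=
      upperSemicontinuous_iff_isOpen_preimage.1 (husc a (lt_of_le_of_lt hab hb)) ((q : ℝ) : EReal)
    obtain ⟨v, hvB, hxv, hsub⟩ := hB.exists_subset_of_mem_open hq1 hopen
    have he : (⟨⟨v, hvB⟩, q⟩ : B × ℚ) ∈ S a := fun y hy => hsub hy
    exact absurd (hSab he x hxv) (not_lt.2 hq2.le)
  let g : B × ℚ → Ordinal := fun e =>
    if h : ∃ α, α < Λ ∧ e ∉ S α then h.choose else 0
  have hg : ∀ e, g e < Λ := by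
    intro e
    by_cases h : ∃ α, α < Λ ∧ e ∉ S α
    · simpa [g, h] using h.choose_spec.1
    · simp only [g, h, dif_neg, not_false_iff]
      exact (Cardinal.ord_aleph0 ▸ Ordinal.omega0_pos).trans_le
        (Cardinal.ord_le_ord.2 Cardinal.aleph0_lt_aleph_one.le)
  obtain ⟨enc, henc⟩ := (Countable.exists_injective_nat (B × ℚ))
  let h : ℕ → Ordinal := fun n => if hn : ∃ e, enc e = n then g hn.choose else 0
  have hhg : ∀ e, h (enc e) = g e := by
    intro e
    have hn : ∃ e', enc e' = enc e := ⟨e, rfl⟩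
    have h1 : hn.choose = e := henc hn.choose_spec
    rw [show h (enc e) = g hn.choose from dif_pos hn, h1]
  have hh : ∀ n, h n < Λ := by
    intro n
    by_cases hn : ∃ e, enc e = n
    · rw [show h n = g hn.choose from dif_pos hn]; exact hg _
    · rw [show h n = 0 from dif_neg hn]
      exact (Cardinal.ord_aleph0 ▸ Ordinal.omega0_pos).trans_le
        (Cardinal.ord_le_ord.2 Cardinal.aleph0_lt_aleph_one.le)
  have hbdd : BddAbove (Set.range h) := Ordinal.bddAbove_range h
  have hsup : (⨆ n, h n) < Λ := by
    refine Cardinal.iSup_lt_ord_lift_of_isRegular Cardinal.isRegular_aleph_one ?_ hh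
    simpa using Cardinal.aleph0_lt_aleph_one
  refine ⟨⨆ n, h n, hsup, ?_⟩
  intro β hβ1 hβ2
  refine key _ β hβ1.le hβ2 ?_
  intro e he
  by_contra heb
  have hex : ∃ α, α < Λ ∧ e ∉ S α := ⟨β, hβ2, heb⟩
  have hle : g e ≤ ⨆ n, h n := (hhg e).symm.trans_le (le_ciSup hbdd (enc e))
  have hmem : e ∈ S (g e) := hanti (g e) (⨆ n, h n) hle hsup he
  rw [show g e = hex.choose from dif_pos hex] at hmem
  exact hex.choose_spec.2 hmem
end

section
/- Let (b_j) be an (s)-sequence in a Banach space with difference sequence (e_j). Then the following are equivalent: (a) (b_j) is boundedly complete; (b) (e_j) is skipped boundedly complete; (c) (e_j) is a (c.c.)-sequence such that whenever sup_n ||∑_{j=1}^n c_j e_j|| < ∞ and c_j → 0, the series ∑ c_j e_j converges. -/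
open Filter Finset

section Aux19
namespace S19

variable {X : Type*} [NormedAddCommGroup X] [NormedSpace ℝ X]

lemma sum_diffSeq (b : ℕ → X) : ∀ n, ∑ j ∈ range (n+1), diffSeq b j = b n := by
  intro n
  induction n with
  | zero => simp [diffSeq]
  | succ n ih =>
      rw [Finset.sum_range_succ, ih]
      simp [diffSeq]

lemma abel1 (b : ℕ → X) (c : ℕ → ℝ) (n : ℕ) :
    ∑ j ∈ range (n+1), c j • diffSeq b j
      = (∑ j ∈ range n, (c j - c (j+1)) • b j) + c n • b n := by
  induction n with
  | zero => simp [diffSeq]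
  | succ n ih =>
      rw [Finset.sum_range_succ (f := fun j => c j • diffSeq b j), ih,
        Finset.sum_range_succ (f := fun j => (c j - c (j+1)) • b j)]
      have : diffSeq b (n+1) = b (n+1) - b n := by simp [diffSeq]
      rw [this]
      simp only [smul_sub, sub_smul]
      abel

lemma abel2 (b : ℕ → X) (c : ℕ → ℝ) (n : ℕ) :
    ∑ j ∈ range (n+1), c j • b j
      = (∑ i ∈ range (n+1), c i) • b n
        - ∑ j ∈ range (n+1), (∑ i ∈ range j, c i) • diffSeq b j := by
  induction n with
  | zero => simp [diffSeq]
  | succ n ih =>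
      rw [Finset.sum_range_succ (f := fun j => c j • b j), ih,
        Finset.sum_range_succ (f := fun j => (∑ i ∈ range j, c i) • diffSeq b j) (n+1)]
      have h1 : diffSeq b (n+1) = b (n+1) - b n := by simp [diffSeq]
      have h2 : (∑ i ∈ range (n+2), c i) = (∑ i ∈ range (n+1), c i) + c (n+1) :=
        Finset.sum_range_succ c (n+1)
      rw [h1, h2]
      simp only [smul_sub, sub_smul, add_smul]
      abel

end S19
end Aux19
set_option linter.unusedSectionVars false

section Aux19b
namespace S19

variable {X : Type*} [NormedAddCommGroup X] [NormedSpace ℝ X] {b : ℕ → X} {C β B : ℝ}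

/-- auxiliary coefficient sequence -/
def wAux (c : ℕ → ℝ) (n : ℕ) : ℕ → ℝ := fun j => if j = n then c n else c j - c (j+1)

lemma wAux_sum_vec (b : ℕ → X) (c : ℕ → ℝ) {m n : ℕ} (hmn : m ≤ n) :
    ∑ j ∈ range m, wAux c n j • b j = ∑ j ∈ range m, (c j - c (j+1)) • b j := by
  refine Finset.sum_congr rfl fun j hj => ?_
  have : j ≠ n := by have := Finset.mem_range.mp hj; omega
  simp [wAux, this]

lemma wAux_sum_full (b : ℕ → X) (c : ℕ → ℝ) (n : ℕ) :
    ∑ j ∈ range (n+1), wAux c n j • b j = ∑ j ∈ range (n+1), c j • diffSeq b j := by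
  rw [abel1 b c n, Finset.sum_range_succ, wAux_sum_vec b c (le_refl n)]
  simp [wAux]

lemma wAux_scalar (c : ℕ → ℝ) (n : ℕ) : ∑ j ∈ range (n+1), wAux c n j = c 0 := by
  rw [Finset.sum_range_succ]
  have h1 : ∑ j ∈ range n, wAux c n j = ∑ j ∈ range n, (c j - c (j+1)) := by
    refine Finset.sum_congr rfl fun j hj => ?_
    have : j ≠ n := by have := Finset.mem_range.mp hj; omega
    simp [wAux, this]
  rw [h1, Finset.sum_range_sub' c n]
  simp [wAux]

section Estimates

variable (hC : 1 ≤ C)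
  (hproj : ∀ (c : ℕ → ℝ) (m n : ℕ), m ≤ n →
    ‖∑ j ∈ range m, c j • b j‖ ≤ C * ‖∑ j ∈ range n, c j • b j‖)
  (hβ : ∀ (c : ℕ → ℝ) (n : ℕ), |∑ j ∈ range n, c j| ≤ β * ‖∑ j ∈ range n, c j • b j‖)

include hproj in
lemma proj_T (c : ℕ → ℝ) {m n : ℕ} (hmn : m ≤ n) :
    ‖∑ j ∈ range m, (c j - c (j+1)) • b j‖ ≤ C * ‖∑ j ∈ range (n+1), c j • diffSeq b j‖ := by
  have h := hproj (wAux c n) m (n+1) (by omega)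
  rwa [wAux_sum_vec b c hmn, wAux_sum_full b c n] at h

include hβ in
lemma c0_le (c : ℕ → ℝ) (n : ℕ) :
    |c 0| ≤ β * ‖∑ j ∈ range (n+1), c j • diffSeq b j‖ := by
  have h := hβ (wAux c n) (n+1)
  rwa [wAux_scalar c n, wAux_sum_full b c n] at h

include hβ in
lemma cdiff_le (c : ℕ → ℝ) (m : ℕ) :
    |c 0 - c m| ≤ β * ‖∑ j ∈ range m, (c j - c (j+1)) • b j‖ := by
  have h := hβ (fun j => c j - c (j+1)) m
  rwa [Finset.sum_range_sub' c m] at h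

include hβ in
lemma beta_pos (hbne0 : b 0 ≠ 0) : 0 < β := by
  have h := hβ (fun _ => 1) 1
  simp at h
  have h0 : 0 < ‖b 0‖ := norm_pos_iff.mpr hbne0
  nlinarith

include hβ in
lemma normb_lb (n : ℕ) : 1 ≤ β * ‖b n‖ := by
  have h := hβ (fun i => if i = n then 1 else 0) (n+1)
  have h1 : ∑ j ∈ range (n+1), (if j = n then (1:ℝ) else 0) = 1 := by
    rw [Finset.sum_ite_eq' (range (n+1)) n (fun _ => (1:ℝ))]
    simp
  have h2 : ∑ j ∈ range (n+1), (if j = n then (1:ℝ) else 0) • b j = b n := by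
    rw [Finset.sum_eq_single n]
    · simp
    · intro i hi hin; simp [hin]
    · intro hn; exact absurd (Finset.self_mem_range_succ n) hn
  rw [h1, h2] at h
  simpa using h

include hproj hβ in
lemma one_le_norm_e (hC : 1 ≤ C) (hbne0 : b 0 ≠ 0) (j : ℕ) :
    1 ≤ β * C * ‖diffSeq b j‖ := by
  have hβ0 : 0 < β := beta_pos hβ hbne0
  match j with
  | 0 =>
      have h := normb_lb hβ 0
      have h0 : (0:ℝ) ≤ ‖b 0‖ := norm_nonneg _
      have : diffSeq b 0 = b 0 := by simp [diffSeq]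
      rw [this]
      nlinarith
  | Nat.succ j =>
      have h4 : 1 ≤ β * ‖b j‖ := normb_lb hβ j
      set c : ℕ → ℝ := fun i => if i = j then 1 else if i = j+1 then -1 else 0 with hc
      have h1 : ∑ i ∈ range (j+1), c i • b i = b j := by
        rw [Finset.sum_eq_single j]
        · simp [hc]
        · intro i hi hij
          have hij2 : i ≠ j + 1 := by have := Finset.mem_range.mp hi; omega
          simp [hc, hij, hij2]
        · intro hn; exact absurd (Finset.self_mem_range_succ j) hn
      have h2 : ∑ i ∈ range (j+2), c i • b i = b j - b (j+1) := by
        rw [show j+2 = (j+1)+1 from rfl, Finset.sum_range_succ, h1]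
        have : c (j+1) = -1 := by simp [hc]
        rw [this]
        module
      have h3 : ‖b j‖ ≤ C * ‖b j - b (j+1)‖ := by
        have := hproj c (j+1) (j+2) (by omega)
        rwa [h1, h2] at this
      have h5 : ‖diffSeq b (j+1)‖ = ‖b j - b (j+1)‖ := by
        have : diffSeq b (j+1) = b (j+1) - b j := by simp [diffSeq]
        rw [this, norm_sub_rev]
      rw [h5]
      nlinarith [norm_nonneg (b j - b (j+1)), norm_nonneg (b j)]

include hproj hβ in
lemma abs_le_smul_e (hC : 1 ≤ C) (hbne0 : b 0 ≠ 0) (j : ℕ) (r : ℝ) :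
    |r| ≤ β * C * ‖r • diffSeq b j‖ := by
  have h := one_le_norm_e hproj hβ hC hbne0 j
  rw [norm_smul, Real.norm_eq_abs]
  nlinarith [abs_nonneg r, norm_nonneg (diffSeq b j)]

include hproj hβ in
lemma cn_le (hC : 1 ≤ C) (hbne0 : b 0 ≠ 0) (c : ℕ → ℝ) (n : ℕ) :
    |c n| ≤ β * (1 + C) * ‖∑ j ∈ range (n+1), c j • diffSeq b j‖ := by
  have hβ0 : 0 < β := beta_pos hβ hbne0
  have h0 := c0_le hβ c n
  have h1 := cdiff_le hβ c n
  have h2 := proj_T hproj c (le_refl n)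
  have habs : |c n| ≤ |c 0| + |c 0 - c n| := by
    calc |c n| = |c 0 - (c 0 - c n)| := by ring_nf
    _ ≤ |c 0| + |c 0 - c n| := abs_sub _ _
  nlinarith [norm_nonneg (∑ j ∈ range (n+1), c j • diffSeq b j),
    norm_nonneg (∑ j ∈ range n, (c j - c (j+1)) • b j)]

end Estimates

end S19
end Aux19b
section Aux19c
namespace S19

variable {X : Type*} [NormedAddCommGroup X] [NormedSpace ℝ X] {b : ℕ → X} {C β B : ℝ}

lemma b_bounded (b : ℕ → X) (hwc : WeakCauchy b) : ∃ B : ℝ, 0 ≤ B ∧ ∀ n, ‖b n‖ ≤ B := by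
  have h : ∀ f : StrongDual ℝ X, ∃ Cf, ∀ n : ℕ,
      ‖(NormedSpace.inclusionInDoubleDual ℝ X (b n)) f‖ ≤ Cf := by
    intro f
    obtain ⟨L, hL⟩ := hwc f
    obtain ⟨Cf, hCf⟩ := (hL.norm).bddAbove_range
    exact ⟨Cf, fun n => hCf ⟨n, rfl⟩⟩
  obtain ⟨C', hC'⟩ := banach_steinhaus
    (g := fun n : ℕ => NormedSpace.inclusionInDoubleDual ℝ X (b n)) h
  refine ⟨max C' 0, le_max_right _ _, fun n => ?_⟩
  have he : ‖NormedSpace.inclusionInDoubleDual ℝ X (b n)‖ = ‖b n‖ :=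
    (NormedSpace.inclusionInDoubleDualLi ℝ (E := X)).norm_map (b n)
  rw [← he]
  exact le_trans (hC' n) (le_max_left _ _)

variable (hC : 1 ≤ C) (hbne : ∀ j, b j ≠ 0)
  (hproj : ∀ (c : ℕ → ℝ) (m n : ℕ), m ≤ n →
    ‖∑ j ∈ range m, c j • b j‖ ≤ C * ‖∑ j ∈ range n, c j • b j‖)
  (hβ : ∀ (c : ℕ → ℝ) (n : ℕ), |∑ j ∈ range n, c j| ≤ β * ‖∑ j ∈ range n, c j • b j‖)
  (hB : ∀ n, ‖b n‖ ≤ B)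

include hB in
lemma sum_e_bound (hB0 : 0 ≤ B) (n : ℕ) : ‖∑ j ∈ range n, diffSeq b j‖ ≤ B := by
  match n with
  | 0 => simpa using hB0
  | Nat.succ n => rw [sum_diffSeq b n]; exact hB n

include hC hbne hproj hβ hB in
lemma e_basic : IsBasicWithConst (C + β * (1 + C) * B) (diffSeq b) := by
  have hβ0 : 0 < β := beta_pos hβ (hbne 0)
  have hB0 : 0 ≤ B := le_trans (norm_nonneg (b 0)) (hB 0)
  have hCe : 1 ≤ C + β * (1 + C) * B := by nlinarith [mul_nonneg (mul_nonneg hβ0.le (by linarith : (0:ℝ) ≤ 1 + C)) hB0]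
  refine ⟨hCe, fun j => ?_, fun c m n hmn => ?_⟩
  · intro h
    have h1 := one_le_norm_e hproj hβ hC (hbne 0) j
    rw [h, norm_zero, mul_zero] at h1
    linarith
  · rcases Nat.eq_zero_or_pos m with hm | hm
    · subst hm
      simp only [Finset.range_zero, Finset.sum_empty, norm_zero]
      have := norm_nonneg (∑ j ∈ range n, c j • diffSeq b j)
      nlinarith
    obtain ⟨m', rfl⟩ : ∃ m', m = m'+1 := ⟨m-1, by omega⟩
    obtain ⟨n', rfl⟩ : ∃ n', n = n'+1 := ⟨n-1, by omega⟩
    have hmn' : m' ≤ n' := by omega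
    rw [abel1 b c m']
    set T := ∑ j ∈ range m', (c j - c (j+1)) • b j with hT
    set P := ∑ j ∈ range (n'+1), c j • diffSeq b j with hP
    have h1 : ‖T‖ ≤ C * ‖P‖ := proj_T hproj c hmn'
    have h2 : |c 0| ≤ β * ‖P‖ := c0_le hβ c n'
    have h3 : |c 0 - c m'| ≤ β * ‖T‖ := cdiff_le hβ c m'
    have h4 : ‖c m' • b m'‖ ≤ |c m'| * B := by
      rw [norm_smul, Real.norm_eq_abs]
      exact mul_le_mul_of_nonneg_left (hB m') (abs_nonneg _)
    have habs : |c m'| ≤ |c 0| + |c 0 - c m'| := by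
      calc |c m'| = |c 0 - (c 0 - c m')| := by ring_nf
      _ ≤ |c 0| + |c 0 - c m'| := abs_sub _ _
    have h5 : |c m'| ≤ β * ‖P‖ + β * (C * ‖P‖) := by nlinarith [norm_nonneg T, norm_nonneg P]
    calc ‖T + c m' • b m'‖ ≤ ‖T‖ + ‖c m' • b m'‖ := norm_add_le _ _
    _ ≤ C * ‖P‖ + (β * ‖P‖ + β * (C * ‖P‖)) * B := by nlinarith [abs_nonneg (c m')]
    _ = (C + β * (1 + C) * B) * ‖P‖ := by ring

include hB in
lemma e_wc (hwc : WeakCauchy b) : WeakCauchy (partialSums (diffSeq b)) := by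
  intro f
  obtain ⟨L, hL⟩ := hwc f
  refine ⟨L, ?_⟩
  rw [← tendsto_add_atTop_iff_nat 1]
  have : (fun n => f (partialSums (diffSeq b) (n+1))) = fun n => f (b n) := by
    funext n
    show f (∑ j ∈ range (n+1), diffSeq b j) = f (b n)
    rw [sum_diffSeq]
  rw [this]
  exact hL

end S19
end Aux19c
section Aux19d
namespace S19

variable {X : Type*} [NormedAddCommGroup X] [NormedSpace ℝ X]

lemma zero_out [CompleteSpace X] (e : ℕ → X) (hsbc : SkippedBoundedlyComplete e)
    (c : ℕ → ℝ) (M : ℝ) (hM : ∀ n, ‖∑ j ∈ range n, c j • e j‖ ≤ M)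
    (φ : ℕ → ℕ) (hφ : StrictMono φ)
    (hsmall : ∀ k, ‖c (φ k) • e (φ k)‖ ≤ (1/2 : ℝ)^k) :
    ∃ x, Tendsto (fun n => ∑ j ∈ range n, c j • e j) atTop (nhds x) := by
  classical
  set c' : ℕ → ℝ := fun j => if j ∈ Set.range φ then 0 else c j with hc'
  set g : ℕ → X := fun j => (if j ∈ Set.range φ then c j else 0) • e j with hg
  have hsplit : ∀ j, c j • e j = c' j • e j + g j := by
    intro j
    simp only [hc', hg]
    by_cases h : j ∈ Set.range φ
    · simp only [if_pos h, zero_smul, zero_add]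
    · simp only [if_neg h, zero_smul, add_zero]
  have hgnorm : Summable (fun j => ‖g j‖) := by
    rw [← Function.Injective.summable_iff hφ.injective ?_]
    · apply Summable.of_nonneg_of_le (fun k => norm_nonneg _) ?_ summable_geometric_two
      intro k
      have hk : φ k ∈ Set.range φ := ⟨k, rfl⟩
      simpa [hg, Function.comp, hk] using hsmall k
    · intro j hj; simp only [hg, if_neg hj, zero_smul, norm_zero]
  have hgsum : Summable g := hgnorm.of_norm
  obtain ⟨s, hs⟩ := hgsum
  have hgt : Tendsto (fun n => ∑ j ∈ range n, g j) atTop (nhds s) := hs.tendsto_sum_nat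
  have hgb : ∀ n, ‖∑ j ∈ range n, g j‖ ≤ ∑' j, ‖g j‖ := fun n =>
    le_trans (norm_sum_le _ _) (Summable.sum_le_tsum _ (fun j _ => norm_nonneg _) hgnorm)
  have hzero : ∀ N, ∃ j ≥ N, c' j = 0 := fun N =>
    ⟨φ N, hφ.le_apply, by simp [hc', Set.mem_range_self]⟩
  have hkey : ∀ n, ∑ j ∈ range n, c' j • e j
      = (∑ j ∈ range n, c j • e j) - ∑ j ∈ range n, g j := by
    intro n
    rw [← Finset.sum_sub_distrib]
    refine Finset.sum_congr rfl fun j _ => ?_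
    rw [hsplit j]; abel
  have hb' : BoundedPartialSums c' e := by
    refine ⟨M + ∑' j, ‖g j‖, fun n => ?_⟩
    rw [hkey n]
    calc ‖(∑ j ∈ range n, c j • e j) - ∑ j ∈ range n, g j‖
        ≤ ‖∑ j ∈ range n, c j • e j‖ + ‖∑ j ∈ range n, g j‖ := norm_sub_le _ _
    _ ≤ M + ∑' j, ‖g j‖ := add_le_add (hM n) (hgb n)
  obtain ⟨x, hx⟩ := hsbc c' hzero hb'
  refine ⟨x + s, ?_⟩
  have heq : (fun n => ∑ j ∈ range n, c j • e j)
      = fun n => (∑ j ∈ range n, c' j • e j) + ∑ j ∈ range n, g j := by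
    funext n; rw [hkey n]; abel
  rw [heq]
  exact hx.add hgt

lemma exists_small_subseq {Be : ℝ} (hBe : 0 < Be) {c : ℕ → ℝ}
    (hc : Tendsto c atTop (nhds 0)) :
    ∃ φ : ℕ → ℕ, StrictMono φ ∧ ∀ k, |c (φ k)| ≤ (1/2 : ℝ)^k / Be := by
  refine extraction_forall_of_eventually (P := fun k j => |c j| ≤ (1/2 : ℝ)^k / Be) fun k => ?_
  have hεpos : (0:ℝ) < (1/2 : ℝ)^k / Be := by positivity
  have h := Metric.tendsto_nhds.mp hc _ hεpos
  filter_upwards [h] with j hj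
  rw [Real.dist_eq, sub_zero] at hj
  exact hj.le

end S19
end Aux19d
section Aux19e
namespace S19

variable {X : Type*} [NormedAddCommGroup X] [NormedSpace ℝ X] [CompleteSpace X]
  {b : ℕ → X} {C β B : ℝ}

variable (hC : 1 ≤ C) (hbne : ∀ j, b j ≠ 0)
  (hproj : ∀ (c : ℕ → ℝ) (m n : ℕ), m ≤ n →
    ‖∑ j ∈ range m, c j • b j‖ ≤ C * ‖∑ j ∈ range n, c j • b j‖)
  (hβ : ∀ (c : ℕ → ℝ) (n : ℕ), |∑ j ∈ range n, c j| ≤ β * ‖∑ j ∈ range n, c j • b j‖)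
  (hB : ∀ n, ‖b n‖ ≤ B)

include hB in
lemma e_norm_ub (j : ℕ) : ‖diffSeq b j‖ ≤ 2 * B + 1 := by
  have hB0 : 0 ≤ B := le_trans (norm_nonneg (b 0)) (hB 0)
  match j with
  | 0 =>
      have : diffSeq b 0 = b 0 := by simp [diffSeq]
      rw [this]; have := hB 0; linarith
  | Nat.succ j =>
      have h : diffSeq b (j+1) = b (j+1) - b j := by simp [diffSeq]
      rw [h]
      have := norm_sub_le (b (j+1)) (b j)
      have := hB (j+1); have := hB j
      linarith

include hB in
lemma star_of_sbc (hsbc : SkippedBoundedlyComplete (diffSeq b)) :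
    ∀ c : ℕ → ℝ, BoundedPartialSums c (diffSeq b) → Tendsto c atTop (nhds 0) →
      ∃ x, Tendsto (fun n => ∑ j ∈ range n, c j • diffSeq b j) atTop (nhds x) := by
  intro c ⟨M, hM⟩ hc0
  have hB0 : 0 ≤ B := le_trans (norm_nonneg (b 0)) (hB 0)
  set Be : ℝ := 2 * B + 1 with hBe
  have hBe0 : 0 < Be := by positivity
  obtain ⟨φ, hφ, hφs⟩ := exists_small_subseq hBe0 hc0
  refine zero_out (diffSeq b) hsbc c M hM φ hφ fun k => ?_
  rw [norm_smul, Real.norm_eq_abs]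
  calc |c (φ k)| * ‖diffSeq b (φ k)‖ ≤ ((1/2 : ℝ)^k / Be) * Be := by
        apply mul_le_mul (hφs k) (e_norm_ub hB (φ k)) (norm_nonneg _)
        positivity
  _ = (1/2 : ℝ)^k := div_mul_cancel₀ _ (ne_of_gt hBe0)

include hC hbne hproj hβ hB in
lemma cc_of_sbc (hsbc : SkippedBoundedlyComplete (diffSeq b)) :
    ∀ c : ℕ → ℝ, BoundedPartialSums c (diffSeq b) → ∃ r, Tendsto c atTop (nhds r) := by
  intro c ⟨M, hM⟩
  have hβ0 : 0 < β := beta_pos hβ (hbne 0)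
  have hB0 : 0 ≤ B := le_trans (norm_nonneg (b 0)) (hB 0)
  have hM0 : 0 ≤ M := le_trans (norm_nonneg _) (hM 0)
  set K : ℝ := β * (1 + C) * M with hK
  have hcK : ∀ n, c n ∈ Set.Icc (-K) K := by
    intro n
    have h1 := cn_le hproj hβ hC (hbne 0) c n
    have h2 : β * (1 + C) * ‖∑ j ∈ range (n+1), c j • diffSeq b j‖ ≤ K := by
      rw [hK]
      apply mul_le_mul_of_nonneg_left (hM (n+1)) (by positivity)
    exact Set.mem_Icc.mpr (abs_le.mp (le_trans h1 h2))
  obtain ⟨r, _, φ, hφ, hcφ⟩ := (isCompact_Icc (a := -K) (b := K)).tendsto_subseq hcK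
  set c2 : ℕ → ℝ := fun j => c j - r with hc2
  have hP2 : ∀ n, ‖∑ j ∈ range n, c2 j • diffSeq b j‖ ≤ M + |r| * B := by
    intro n
    have hsp : ∑ j ∈ range n, c2 j • diffSeq b j
        = (∑ j ∈ range n, c j • diffSeq b j) - r • ∑ j ∈ range n, diffSeq b j := by
      rw [Finset.smul_sum, ← Finset.sum_sub_distrib]
      refine Finset.sum_congr rfl fun j _ => ?_
      rw [hc2]; rw [sub_smul]
    rw [hsp]
    calc ‖(∑ j ∈ range n, c j • diffSeq b j) - r • ∑ j ∈ range n, diffSeq b j‖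
        ≤ ‖∑ j ∈ range n, c j • diffSeq b j‖ + ‖r • ∑ j ∈ range n, diffSeq b j‖ :=
          norm_sub_le _ _
    _ ≤ M + |r| * B := by
        refine add_le_add (hM n) ?_
        rw [norm_smul, Real.norm_eq_abs]
        exact mul_le_mul_of_nonneg_left (sum_e_bound hB hB0 n) (abs_nonneg _)
  have hc2φ : Tendsto (c2 ∘ φ) atTop (nhds 0) := by
    have := hcφ.sub_const r
    rw [sub_self] at this
    exact this
  set Be : ℝ := 2 * B + 1 with hBe
  have hBe0 : 0 < Be := by positivity
  obtain ⟨ψ, hψ, hψs⟩ := exists_small_subseq hBe0 hc2φ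
  obtain ⟨y, hy⟩ := zero_out (diffSeq b) hsbc c2 (M + |r| * B) hP2 (φ ∘ ψ) (hφ.comp hψ)
    (fun k => by
      rw [norm_smul, Real.norm_eq_abs]
      calc |c2 ((φ ∘ ψ) k)| * ‖diffSeq b ((φ ∘ ψ) k)‖ ≤ ((1/2 : ℝ)^k / Be) * Be := by
            apply mul_le_mul (hψs k) (e_norm_ub hB _) (norm_nonneg _)
            positivity
      _ = (1/2 : ℝ)^k := div_mul_cancel₀ _ (ne_of_gt hBe0))
  -- now c2 n • e n → 0
  have hterm : Tendsto (fun n => c2 n • diffSeq b n) atTop (nhds 0) := by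
    have h1 : Tendsto (fun n => ∑ j ∈ range (n+1), c2 j • diffSeq b j) atTop (nhds y) :=
      hy.comp (tendsto_add_atTop_nat 1)
    have h2 := h1.sub hy
    rw [sub_self] at h2
    have heq : (fun n => (∑ j ∈ range (n+1), c2 j • diffSeq b j)
        - ∑ j ∈ range n, c2 j • diffSeq b j) = fun n => c2 n • diffSeq b n := by
      funext n; rw [Finset.sum_range_succ]; abel
    rwa [heq] at h2
  have hc20 : Tendsto c2 atTop (nhds 0) := by
    apply squeeze_zero_norm (a := fun n => β * C * ‖c2 n • diffSeq b n‖)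
    · intro n
      rw [Real.norm_eq_abs]
      exact abs_le_smul_e hproj hβ hC (hbne 0) n (c2 n)
    · have := (hterm.norm).const_mul (β * C)
      rw [norm_zero, mul_zero] at this
      exact this
  refine ⟨r, ?_⟩
  have := hc20.add_const r
  rw [zero_add] at this
  have heq : (fun n => c2 n + r) = c := by funext n; rw [hc2]; ring
  rwa [heq] at this

end S19
end Aux19e
section Aux19f
namespace S19

variable {X : Type*} [NormedAddCommGroup X] [NormedSpace ℝ X] [CompleteSpace X]
  {b : ℕ → X} {C β B : ℝ}

variable (hC : 1 ≤ C) (hbne : ∀ j, b j ≠ 0)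
  (hproj : ∀ (c : ℕ → ℝ) (m n : ℕ), m ≤ n →
    ‖∑ j ∈ range m, c j • b j‖ ≤ C * ‖∑ j ∈ range n, c j • b j‖)
  (hβ : ∀ (c : ℕ → ℝ) (n : ℕ), |∑ j ∈ range n, c j| ≤ β * ‖∑ j ∈ range n, c j • b j‖)
  (hB : ∀ n, ‖b n‖ ≤ B)

include hbne hβ hB in
lemma bc_of_cc_star
    (hcc3 : ∀ c : ℕ → ℝ, BoundedPartialSums c (diffSeq b) → ∃ r, Tendsto c atTop (nhds r))
    (hstar : ∀ c : ℕ → ℝ, BoundedPartialSums c (diffSeq b) → Tendsto c atTop (nhds 0) →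
      ∃ x, Tendsto (fun n => ∑ j ∈ range n, c j • diffSeq b j) atTop (nhds x)) :
    BoundedlyComplete b := by
  rintro c ⟨M, hM⟩
  have hβ0 : 0 < β := beta_pos hβ (hbne 0)
  have hB0 : 0 ≤ B := le_trans (norm_nonneg (b 0)) (hB 0)
  have hM0 : 0 ≤ M := le_trans (norm_nonneg _) (hM 0)
  set σ : ℕ → ℝ := fun n => ∑ i ∈ range n, c i with hσ
  have hσb : ∀ n, |σ n| ≤ β * M :=
    fun n => le_trans (hβ c n) (mul_le_mul_of_nonneg_left (hM n) hβ0.le)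
  have hPσ : ∀ n, ‖∑ j ∈ range n, σ j • diffSeq b j‖ ≤ β * M * B + M := by
    intro n
    match n with
    | 0 => simp; positivity
    | Nat.succ n =>
        have h := abel2 b c n
        have h2 : ∑ j ∈ range (n+1), σ j • diffSeq b j
            = σ (n+1) • b n - ∑ j ∈ range (n+1), c j • b j := by
          rw [h]; simp only [hσ]; abel
        rw [h2]
        calc ‖σ (n+1) • b n - ∑ j ∈ range (n+1), c j • b j‖
            ≤ ‖σ (n+1) • b n‖ + ‖∑ j ∈ range (n+1), c j • b j‖ := norm_sub_le _ _
        _ ≤ β * M * B + M := by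
            refine add_le_add ?_ (hM (n+1))
            rw [norm_smul, Real.norm_eq_abs]
            calc |σ (n+1)| * ‖b n‖ ≤ (β * M) * B :=
                  mul_le_mul (hσb (n+1)) (hB n) (norm_nonneg _) (by positivity)
            _ = β * M * B := by ring
  obtain ⟨s, hs⟩ := hcc3 σ ⟨β * M * B + M, hPσ⟩
  set v : ℕ → ℝ := fun j => σ j - s with hv
  have hv0 : Tendsto v atTop (nhds 0) := by
    have := hs.sub_const s; rwa [sub_self] at this
  have hPv : ∀ n, ‖∑ j ∈ range n, v j • diffSeq b j‖ ≤ (β * M * B + M) + |s| * B := by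
    intro n
    have hsp : ∑ j ∈ range n, v j • diffSeq b j
        = (∑ j ∈ range n, σ j • diffSeq b j) - s • ∑ j ∈ range n, diffSeq b j := by
      rw [Finset.smul_sum, ← Finset.sum_sub_distrib]
      exact Finset.sum_congr rfl fun j _ => by rw [hv]; rw [sub_smul]
    rw [hsp]
    calc ‖(∑ j ∈ range n, σ j • diffSeq b j) - s • ∑ j ∈ range n, diffSeq b j‖
        ≤ ‖∑ j ∈ range n, σ j • diffSeq b j‖ + ‖s • ∑ j ∈ range n, diffSeq b j‖ :=
          norm_sub_le _ _
    _ ≤ (β * M * B + M) + |s| * B := by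
        refine add_le_add (hPσ n) ?_
        rw [norm_smul, Real.norm_eq_abs]
        exact mul_le_mul_of_nonneg_left (sum_e_bound hB hB0 n) (abs_nonneg _)
  obtain ⟨y, hy⟩ := hstar v ⟨_, hPv⟩ hv0
  -- key identity
  have hQ : ∀ n, ∑ j ∈ range (n+1), c j • b j
      = (σ (n+1) - s) • b n - ∑ j ∈ range (n+1), v j • diffSeq b j := by
    intro n
    rw [abel2 b c n]
    have h1 : ∑ j ∈ range (n+1), (∑ i ∈ range j, c i) • diffSeq b j
        = (∑ j ∈ range (n+1), v j • diffSeq b j) + s • b n := by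
      rw [← sum_diffSeq b n, Finset.smul_sum, ← Finset.sum_add_distrib]
      refine Finset.sum_congr rfl fun j _ => ?_
      rw [← add_smul]
      congr 1
      simp [hv, hσ]
    rw [h1, sub_smul]
    have : (∑ i ∈ range (n+1), c i) = σ (n+1) := rfl
    rw [this]
    abel
  -- convergence
  have hbn0 : Tendsto (fun n => (σ (n+1) - s) • b n) atTop (nhds 0) := by
    apply squeeze_zero_norm (a := fun n => |σ (n+1) - s| * B)
    · intro n
      rw [norm_smul, Real.norm_eq_abs]
      exact mul_le_mul_of_nonneg_left (hB n) (abs_nonneg _)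
    · have h1 : Tendsto (fun n => σ (n+1) - s) atTop (nhds 0) :=
        hv0.comp (tendsto_add_atTop_nat 1)
      have h2 := (h1.abs).mul_const B
      rw [abs_zero, zero_mul] at h2
      exact h2
  have hPv1 : Tendsto (fun n => ∑ j ∈ range (n+1), v j • diffSeq b j) atTop (nhds y) :=
    hy.comp (tendsto_add_atTop_nat 1)
  have hQt : Tendsto (fun n => ∑ j ∈ range (n+1), c j • b j) atTop (nhds (0 - y)) := by
    have := hbn0.sub hPv1
    have heq : (fun n => (σ (n+1) - s) • b n - ∑ j ∈ range (n+1), v j • diffSeq b j)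
        = fun n => ∑ j ∈ range (n+1), c j • b j := by
      funext n; rw [hQ n]
    rwa [heq] at this
  exact ⟨0 - y, (tendsto_add_atTop_iff_nat 1).mp hQt⟩

include hC hbne hproj hβ hB in
lemma sbc_of_bc (hbc : BoundedlyComplete b) : SkippedBoundedlyComplete (diffSeq b) := by
  rintro c hzeros ⟨M, hM⟩
  have hβ0 : 0 < β := beta_pos hβ (hbne 0)
  have hB0 : 0 ≤ B := le_trans (norm_nonneg (b 0)) (hB 0)
  have hM0 : 0 ≤ M := le_trans (norm_nonneg _) (hM 0)
  set d : ℕ → ℝ := fun j => c j - c (j+1) with hd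
  have hT : ∀ n, ∑ j ∈ range n, d j • b j
      = (∑ j ∈ range (n+1), c j • diffSeq b j) - c n • b n := by
    intro n; rw [abel1 b c n]; abel
  have hK : ∀ n, |c n| ≤ β * (1 + C) * M := by
    intro n
    refine le_trans (cn_le hproj hβ hC (hbne 0) c n) ?_
    exact mul_le_mul_of_nonneg_left (hM (n+1)) (by positivity)
  have hTb : BoundedPartialSums d b := by
    refine ⟨M + β * (1 + C) * M * B, fun n => ?_⟩
    rw [hT n]
    calc ‖(∑ j ∈ range (n+1), c j • diffSeq b j) - c n • b n‖
        ≤ ‖∑ j ∈ range (n+1), c j • diffSeq b j‖ + ‖c n • b n‖ := norm_sub_le _ _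
    _ ≤ M + β * (1 + C) * M * B := by
        refine add_le_add (hM (n+1)) ?_
        rw [norm_smul, Real.norm_eq_abs]
        exact mul_le_mul (hK n) (hB n) (norm_nonneg _) (by positivity)
  obtain ⟨x, hx⟩ := hbc d hTb
  -- Cauchy estimate
  have hcd : ∀ m n : ℕ, m ≤ n → |c m - c n|
      ≤ β * ‖(∑ j ∈ range n, d j • b j) - ∑ j ∈ range m, d j • b j‖ := by
    intro m n hmn
    classical
    set d' : ℕ → ℝ := fun j => if j < m then 0 else d j with hd'
    have hsubs : ∀ (f : ℕ → ℝ) (v : ℕ → X),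
        ∑ j ∈ range n, (if j < m then f j else 0) • v j = ∑ j ∈ range m, f j • v j := by
      intro f v
      rw [← Finset.sum_subset (Finset.range_subset_range.mpr hmn)
        (fun j _ hj => by
          have : ¬ j < m := fun hc => hj (Finset.mem_range.mpr hc)
          simp [this])]
      exact Finset.sum_congr rfl fun j hj => by simp [Finset.mem_range.mp hj]
    have h1 : ∑ j ∈ range n, d' j = c m - c n := by
      have hsplit : ∀ j, d' j = d j - (if j < m then d j else 0) := by
        intro j; by_cases h : j < m <;> simp [hd', h]
      calc ∑ j ∈ range n, d' j
          = (∑ j ∈ range n, d j) - ∑ j ∈ range n, (if j < m then d j else 0) := by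
            rw [← Finset.sum_sub_distrib]; exact Finset.sum_congr rfl fun j _ => hsplit j
      _ = (c 0 - c n) - (c 0 - c m) := by
            have hv : ∑ j ∈ range n, (if j < m then d j else 0) = ∑ j ∈ range m, d j := by
              rw [← Finset.sum_subset (Finset.range_subset_range.mpr hmn)
                (fun j _ hj => by
                  have : ¬ j < m := fun hc => hj (Finset.mem_range.mpr hc)
                  simp [this])]
              exact Finset.sum_congr rfl fun j hj => by simp [Finset.mem_range.mp hj]
            rw [hv, hd]
            rw [Finset.sum_range_sub' c n, Finset.sum_range_sub' c m]
      _ = c m - c n := by ring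
    have h2 : ∑ j ∈ range n, d' j • b j
        = (∑ j ∈ range n, d j • b j) - ∑ j ∈ range m, d j • b j := by
      have hsplit : ∀ j, d' j • b j = d j • b j - (if j < m then d j else 0) • b j := by
        intro j; by_cases h : j < m <;> simp [hd', h]
      calc ∑ j ∈ range n, d' j • b j
          = (∑ j ∈ range n, d j • b j) - ∑ j ∈ range n, (if j < m then d j else 0) • b j := by
            rw [← Finset.sum_sub_distrib]; exact Finset.sum_congr rfl fun j _ => hsplit j
      _ = (∑ j ∈ range n, d j • b j) - ∑ j ∈ range m, d j • b j := by rw [hsubs d b]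
    have := hβ d' n
    rwa [h1, h2] at this
  have hTc : CauchySeq (fun n => ∑ j ∈ range n, d j • b j) := hx.cauchySeq
  have hcc : CauchySeq c := by
    rw [Metric.cauchySeq_iff] at hTc ⊢
    intro ε hε
    obtain ⟨N, hN⟩ := hTc (ε / β) (by positivity)
    refine ⟨N, fun m hm n hn => ?_⟩
    have key : ∀ m n : ℕ, N ≤ m → N ≤ n → m ≤ n → dist (c m) (c n) < ε := by
      intro m n hm hn hmn
      have h1 := hcd m n hmn
      have h2 : dist (∑ j ∈ range n, d j • b j) (∑ j ∈ range m, d j • b j) < ε / β :=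
        hN n hn m hm
      rw [dist_eq_norm] at h2
      rw [Real.dist_eq]
      calc |c m - c n| ≤ β * ‖(∑ j ∈ range n, d j • b j) - ∑ j ∈ range m, d j • b j‖ := h1
      _ < β * (ε / β) := by exact (mul_lt_mul_iff_right₀ hβ0).mpr h2
      _ = ε := by field_simp
    rcases le_total m n with h | h
    · exact key m n hm hn h
    · rw [dist_comm]; exact key n m hn hm h
  obtain ⟨L, hL⟩ := cauchySeq_tendsto_of_complete hcc
  have hL0 : L = 0 := by
    by_contra h
    have hLpos : 0 < |L| := abs_pos.mpr h
    have hev := Metric.tendsto_nhds.mp hL _ hLpos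
    rw [eventually_atTop] at hev
    obtain ⟨N, hN⟩ := hev
    obtain ⟨j, hj, hj0⟩ := hzeros N
    have := hN j hj
    rw [Real.dist_eq, hj0, zero_sub, abs_neg] at this
    exact lt_irrefl _ this
  rw [hL0] at hL
  have h1 : Tendsto (fun n => c n • b n) atTop (nhds 0) := by
    apply squeeze_zero_norm (a := fun n => |c n| * B)
    · intro n; rw [norm_smul, Real.norm_eq_abs]
      exact mul_le_mul_of_nonneg_left (hB n) (abs_nonneg _)
    · have h2 := (hL.abs).mul_const B
      rw [abs_zero, zero_mul] at h2
      exact h2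
  refine ⟨x, ?_⟩
  have h2 : Tendsto (fun n => ∑ j ∈ range (n+1), c j • diffSeq b j) atTop (nhds (x + 0)) := by
    have heq : (fun n => ∑ j ∈ range (n+1), c j • diffSeq b j)
        = fun n => (∑ j ∈ range n, d j • b j) + c n • b n := by
      funext n; rw [hT n]; abel
    rw [heq]
    exact hx.add h1
  rw [add_zero] at h2
  exact (tendsto_add_atTop_iff_nat 1).mp h2

end S19
end Aux19f

/-- for an (s)-sequence b with difference sequence e, bounded
completeness of b is equivalent to e being skipped boundedly complete, and to e
being (c.c.) with convergence of bounded partial sums with coefficients tending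
to zero. -/
theorem stmt19 {X : Type*} [NormedAddCommGroup X] [NormedSpace ℝ X] [CompleteSpace X]
    (b : ℕ → X) (hb : IsSSeq b) :
    (BoundedlyComplete b ↔ SkippedBoundedlyComplete (diffSeq b)) ∧
    (BoundedlyComplete b ↔
      (IsCC (diffSeq b) ∧
        ∀ c : ℕ → ℝ, BoundedPartialSums c (diffSeq b) →
          Filter.Tendsto c Filter.atTop (nhds 0) →
          ∃ x : X, Filter.Tendsto (fun n => ∑ j ∈ Finset.range n, c j • diffSeq b j)
            Filter.atTop (nhds x))) := by
  obtain ⟨hwc, ⟨C, hC, hbne, hproj⟩, ⟨β, hβ⟩⟩ := hb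
  obtain ⟨B, hB0, hB⟩ := S19.b_bounded b hwc
  have hab : BoundedlyComplete b → SkippedBoundedlyComplete (diffSeq b) :=
    S19.sbc_of_bc hC hbne hproj hβ hB
  have hbcc : SkippedBoundedlyComplete (diffSeq b) →
      ∀ c : ℕ → ℝ, BoundedPartialSums c (diffSeq b) → ∃ r, Tendsto c atTop (nhds r) :=
    S19.cc_of_sbc hC hbne hproj hβ hB
  have hbstar : SkippedBoundedlyComplete (diffSeq b) →
      ∀ c : ℕ → ℝ, BoundedPartialSums c (diffSeq b) → Tendsto c atTop (nhds 0) →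
        ∃ x, Tendsto (fun n => ∑ j ∈ range n, c j • diffSeq b j) atTop (nhds x) :=
    S19.star_of_sbc hB
  have hca :
      (∀ c : ℕ → ℝ, BoundedPartialSums c (diffSeq b) → ∃ r, Tendsto c atTop (nhds r)) →
      (∀ c : ℕ → ℝ, BoundedPartialSums c (diffSeq b) → Tendsto c atTop (nhds 0) →
        ∃ x, Tendsto (fun n => ∑ j ∈ range n, c j • diffSeq b j) atTop (nhds x)) →
      BoundedlyComplete b :=
    fun h1 h2 => S19.bc_of_cc_star hbne hβ hB h1 h2
  have hebasic : IsBasic (diffSeq b) := ⟨_, S19.e_basic hC hbne hproj hβ hB⟩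
  have hewc : WeakCauchy (partialSums (diffSeq b)) := S19.e_wc hB hwc
  constructor
  · exact ⟨hab, fun hs => hca (hbcc hs) (hbstar hs)⟩
  · constructor
    · intro hbc
      have hs := hab hbc
      exact ⟨⟨hebasic, hewc, hbcc hs⟩, hbstar hs⟩
    · rintro ⟨⟨_, _, hcc3⟩, hstar⟩
      exact hca hcc3 hstar
end
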